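/- arXiv:2503.19299 — 11 statements merged into one kernel-verified Lean document; each statement's English description precedes it below -/
import Mathlib

section
/- Let A and B be sets of integers with 1 ∈ A and 0 ∈ B, and let z be a positive integer. Then ρ_z(A ⊕ B) ≥ ρ_z(A) + ρ_z(B) − ρ_z(A)·ρ_z(B). -/
open Pointwise

/-- Greedy sumset: sums a + b where b fits strictly below the gap to the next element of A. -/
def greedySum (A B : Set ℤ) : Set ℤ :=
  {z | ∃ a ∈ A, ∃ b ∈ B, 0 ≤ b ∧ z = a + b ∧ ∀ a' ∈ A, a' ≤ a + b → a' ≤ a}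

/-- Density of a set of integers over the interval [1, z]. -/
noncomputable def dens (z : ℕ) (S : Set ℤ) : ℝ :=
  sInf {r : ℝ | ∃ z' : ℕ, 1 ≤ z' ∧ z' ≤ z ∧ r = (S ∩ Set.Icc 1 (z' : ℤ)).ncard / z'}

/-- k-fold greedy sumset. -/
def kGreedy : ℕ → Set ℤ → Set ℤ
  | 0, _ => {0}
  | k + 1, A => greedySum A (kGreedy k A)

/-- k-fold sumset. -/
def kFold : ℕ → Set ℤ → Set ℤ
  | 0, _ => {0}
  | k + 1, A => A + kFold k A

lemma dens_bdd (z : ℕ) (S : Set ℤ) :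
    ∀ r ∈ {r : ℝ | ∃ z' : ℕ, 1 ≤ z' ∧ z' ≤ z ∧ r = (S ∩ Set.Icc 1 (z' : ℤ)).ncard / z'}, 0 ≤ r := by
  rintro r ⟨m, h1, h2, rfl⟩
  positivity

lemma dens_nonneg (z : ℕ) (S : Set ℤ) : 0 ≤ dens z S :=
  Real.sInf_nonneg (dens_bdd z S)

lemma dens_le (z : ℕ) (S : Set ℤ) {m : ℕ} (h1 : 1 ≤ m) (h2 : m ≤ z) :
    dens z S ≤ (S ∩ Set.Icc 1 (m : ℤ)).ncard / m :=
  csInf_le ⟨0, dens_bdd z S⟩ ⟨m, h1, h2, rfl⟩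

lemma dens_mul_le (z : ℕ) (S : Set ℤ) {m : ℕ} (h1 : 1 ≤ m) (h2 : m ≤ z) :
    dens z S * m ≤ (S ∩ Set.Icc 1 (m : ℤ)).ncard := by
  have := dens_le z S h1 h2
  have hm : (0:ℝ) < m := by exact_mod_cast h1
  rw [le_div_iff₀ hm] at this
  exact this

lemma dens_le_one (z : ℕ) (S : Set ℤ) (hz : 1 ≤ z) : dens z S ≤ 1 := by
  have h := dens_le z S le_rfl hz
  refine h.trans ?_
  have : (S ∩ Set.Icc 1 ((1:ℕ):ℤ)).ncard ≤ (Set.Icc (1:ℤ) ((1:ℕ):ℤ)).ncard :=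
    Set.ncard_le_ncard Set.inter_subset_right (Set.finite_Icc _ _)
  have h2 : (Set.Icc (1:ℤ) ((1:ℕ):ℤ)).ncard = 1 := by simp [Set.Icc_self]
  rw [h2] at this
  calc ((S ∩ Set.Icc 1 ((1:ℕ):ℤ)).ncard : ℝ) / (1:ℕ) ≤ 1 / 1 := by
        apply div_le_div₀ (by norm_num) (by exact_mod_cast this) (by norm_num) (by norm_num)
    _ = 1 := by norm_num

lemma ncard_inter_Icc (S : Set ℤ) (a b : ℤ) [DecidablePred (· ∈ S)] :
    (S ∩ Set.Icc a b).ncard = ((Finset.Icc a b).filter (· ∈ S)).card := by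
  rw [← Set.ncard_coe_finset]
  congr 1
  ext x
  simp [and_comm]

lemma key (A B : Set ℤ) (hA : (1:ℤ) ∈ A) (hB : (0:ℤ) ∈ B) (z z' : ℕ)
    (h1 : 1 ≤ z') (h2 : z' ≤ z) :
    (dens z A + dens z B - dens z A * dens z B) * z' ≤
      ((greedySum A B ∩ Set.Icc 1 (z':ℤ)).ncard : ℝ) := by
  classical
  set α := dens z A with hαd
  set β := dens z B with hβd
  have hα0 : 0 ≤ α := dens_nonneg z A
  have hβ0 : 0 ≤ β := dens_nonneg z B
  have hβ1 : β ≤ 1 := dens_le_one z B (le_trans h1 h2)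
  have hz1 : (1:ℤ) ≤ (z':ℤ) := by exact_mod_cast h1
  set F : Finset ℤ := (Finset.Icc 1 (z':ℤ)).filter (· ∈ A) with hF
  have h1F : (1:ℤ) ∈ F := by simp [hF, hA, hz1]
  have hmemF : ∀ x ∈ F, (1:ℤ) ≤ x ∧ x ≤ (z':ℤ) ∧ x ∈ A := by
    intro x hx
    simp only [hF, Finset.mem_filter, Finset.mem_Icc] at hx
    exact ⟨hx.1.1, hx.1.2, hx.2⟩
  set c : ℤ → ℤ := fun a =>
    if h : (F.filter (a < ·)).Nonempty then (F.filter (a < ·)).min' h else (z':ℤ)+1 with hc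
  have hcA : ∀ a ∈ F, ∀ x ∈ A, a < x → x ≤ (z':ℤ) → c a ≤ x := by
    intro a ha x hx hax hxz
    have haz : (1:ℤ) ≤ a := (hmemF a ha).1
    have hxF : x ∈ F.filter (a < ·) := by
      simp only [hF, Finset.mem_filter, Finset.mem_Icc]
      exact ⟨⟨⟨by omega, hxz⟩, hx⟩, hax⟩
    simp only [hc]
    rw [dif_pos ⟨x, hxF⟩]
    exact Finset.min'_le _ _ hxF
  have hlt : ∀ a ∈ F, a < c a := by
    intro a ha
    have haz : a ≤ (z':ℤ) := (hmemF a ha).2.1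
    simp only [hc]
    split
    · next h => exact (Finset.mem_filter.mp (Finset.min'_mem _ h)).2
    · omega
  have hcle : ∀ a, c a ≤ (z':ℤ) + 1 := by
    intro a
    simp only [hc]
    split
    · next h =>
        have hm := Finset.min'_mem _ h
        rw [Finset.mem_filter] at hm
        have := (hmemF _ hm.1).2.1
        omega
    · exact le_rfl
  -- coverage
  have hcov : ∀ m : ℤ, 1 ≤ m → m ≤ (z':ℤ) → ∃ a ∈ F, a ≤ m ∧ m < c a := by
    intro m hm1 hm2
    have hne : ((F.filter (· ≤ m))).Nonempty := ⟨1, by simp [Finset.mem_filter, h1F, hm1]⟩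
    obtain ⟨haF, ham⟩ := Finset.mem_filter.mp (Finset.max'_mem _ hne)
    refine ⟨(F.filter (· ≤ m)).max' hne, haF, ham, ?_⟩
    by_contra hcon
    push_neg at hcon
    simp only [hc] at hcon
    by_cases h : (F.filter ((F.filter (· ≤ m)).max' hne < ·)).Nonempty
    · rw [dif_pos h] at hcon
      have hmin := Finset.min'_mem _ h
      rw [Finset.mem_filter] at hmin
      have : (F.filter ((F.filter (· ≤ m)).max' hne < ·)).min' h ≤ (F.filter (· ≤ m)).max' hne :=
        Finset.le_max' (F.filter (· ≤ m)) _ (Finset.mem_filter.mpr ⟨hmin.1, hcon⟩)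
      omega
    · rw [dif_neg h] at hcon
      omega
  -- disjointness of c-intervals
  have hdisj : ∀ a ∈ F, ∀ a' ∈ F, a ≠ a' →
      Disjoint (Finset.Ico a (c a)) (Finset.Ico a' (c a')) := by
    have key : ∀ a ∈ F, ∀ a' ∈ F, a < a' → c a ≤ a' := by
      intro a ha a' ha' hlt'
      exact hcA a ha a' (hmemF a' ha').2.2 hlt' (hmemF a' ha').2.1
    intro a ha a' ha' hne
    rcases lt_or_gt_of_ne hne with h | h
    · have := key a ha a' ha' h
      exact Finset.Ico_disjoint_Ico_consecutive a (c a) (c a') |>.mono le_rfl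
        (Finset.Ico_subset_Ico this le_rfl)
    · have := key a' ha' a ha h
      exact (Finset.Ico_disjoint_Ico_consecutive a' (c a') (c a) |>.mono le_rfl
        (Finset.Ico_subset_Ico this le_rfl)).symm
  -- partition
  have hpart : F.biUnion (fun a => Finset.Ico a (c a)) = Finset.Icc 1 (z':ℤ) := by
    apply Finset.Subset.antisymm
    · intro x hx
      rw [Finset.mem_biUnion] at hx
      obtain ⟨a, ha, hx⟩ := hx
      rw [Finset.mem_Ico] at hx
      have h1a := (hmemF a ha).1
      have h2a := hcle a
      rw [Finset.mem_Icc]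
      omega
    · intro m hm
      rw [Finset.mem_Icc] at hm
      obtain ⟨a, ha, h1a, h2a⟩ := hcov m hm.1 hm.2
      rw [Finset.mem_biUnion]
      exact ⟨a, ha, Finset.mem_Ico.mpr ⟨h1a, h2a⟩⟩
  have hsum : ∑ a ∈ F, (c a - a) = (z':ℤ) := by
    have hcards : ∑ a ∈ F, (Finset.Ico a (c a)).card = (Finset.Icc (1:ℤ) (z':ℤ)).card := by
      rw [← hpart]
      exact (Finset.card_biUnion hdisj).symm
    have : ∑ a ∈ F, ((Finset.Ico a (c a)).card : ℤ) = ((Finset.Icc (1:ℤ) (z':ℤ)).card : ℤ) := by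
      exact_mod_cast congrArg (Nat.cast : ℕ → ℤ) hcards
    rw [Int.card_Icc] at this
    calc ∑ a ∈ F, (c a - a) = ∑ a ∈ F, ((Finset.Ico a (c a)).card : ℤ) := by
          apply Finset.sum_congr rfl
          intro a ha
          rw [Int.card_Ico, Int.toNat_of_nonneg (by have := hlt a ha; omega)]
      _ = (z':ℤ) := by rw [this]; omega
  -- translated B-blocks
  set T : ℤ → Finset ℤ := fun a => ((Finset.Ico (0:ℤ) (c a - a)).filter (· ∈ B)).image (a + ·) with hT
  have hTIco : ∀ a, T a ⊆ Finset.Ico a (c a) := by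
    intro a x hx
    simp only [hT, Finset.mem_image, Finset.mem_filter, Finset.mem_Ico] at hx
    obtain ⟨b, ⟨⟨hb0, hbg⟩, hbB⟩, rfl⟩ := hx
    rw [Finset.mem_Ico]; omega
  have hTsub : ∀ a ∈ F, T a ⊆ (Finset.Icc 1 (z':ℤ)).filter (· ∈ greedySum A B) := by
    intro a ha x hx
    simp only [hT, Finset.mem_image, Finset.mem_filter, Finset.mem_Ico] at hx
    obtain ⟨b, ⟨⟨hb0, hbg⟩, hbB⟩, rfl⟩ := hx
    have h1a := (hmemF a ha).1
    have h2a := (hmemF a ha).2.1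
    have hAa := (hmemF a ha).2.2
    have hca := hcle a
    rw [Finset.mem_filter, Finset.mem_Icc]
    refine ⟨⟨by omega, by omega⟩, a, hAa, b, hbB, hb0, rfl, ?_⟩
    intro a' ha' hle
    by_contra hgt
    push_neg at hgt
    have : c a ≤ a' := hcA a ha a' ha' hgt (by omega)
    omega
  have hTdisj : ∀ a ∈ F, ∀ a' ∈ F, a ≠ a' → Disjoint (T a) (T a') := by
    intro a ha a' ha' hne
    exact (hdisj a ha a' ha' hne).mono (hTIco a) (hTIco a')
  have hcardT : ∀ a ∈ F, (1:ℝ) + β * (((c a : ℝ)) - a - 1) ≤ ((T a).card : ℝ) := by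
    intro a ha
    have hg1 : 1 ≤ c a - a := by have := hlt a ha; omega
    have hgz : c a - a ≤ (z':ℤ) := by
      have := hcle a; have := (hmemF a ha).1; omega
    have hcardim : (T a).card = ((Finset.Ico (0:ℤ) (c a - a)).filter (· ∈ B)).card := by
      simp only [hT]
      exact Finset.card_image_of_injective _ (add_right_injective a)
    have hsplit : (Finset.Ico (0:ℤ) (c a - a)).filter (· ∈ B)
        = insert 0 ((Finset.Ico (1:ℤ) (c a - a)).filter (· ∈ B)) := by
      ext x
      simp only [Finset.mem_filter, Finset.mem_insert, Finset.mem_Ico]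
      constructor
      · rintro ⟨⟨h0, h1'⟩, hb⟩
        rcases eq_or_lt_of_le h0 with h | h
        · exact Or.inl h.symm
        · exact Or.inr ⟨⟨by omega, h1'⟩, hb⟩
      · rintro (rfl | ⟨⟨h0, h1'⟩, hb⟩)
        · exact ⟨⟨le_rfl, by omega⟩, hB⟩
        · exact ⟨⟨by omega, h1'⟩, hb⟩
    have hcard0 : ((Finset.Ico (0:ℤ) (c a - a)).filter (· ∈ B)).card
        = 1 + ((Finset.Ico (1:ℤ) (c a - a)).filter (· ∈ B)).card := by
      rw [hsplit, Finset.card_insert_of_notMem (by simp)]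
      omega
    have htail : β * (((c a : ℝ)) - a - 1) ≤ (((Finset.Ico (1:ℤ) (c a - a)).filter (· ∈ B)).card : ℝ) := by
      rcases eq_or_lt_of_le hg1 with h | h
      · have h0 : ((c a : ℝ)) - (a:ℝ) - 1 = 0 := by
          have : ((c a - a : ℤ) : ℝ) = 1 := by rw [← h]; norm_num
          push_cast at this; linarith
        rw [h0, mul_zero]
        exact Nat.cast_nonneg _
      · set m : ℕ := (c a - a - 1).toNat with hm
        have hmz : (m : ℤ) = c a - a - 1 := Int.toNat_of_nonneg (by omega)
        have hm1 : 1 ≤ m := by omega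
        have hm2 : m ≤ z := by omega
        have hd := dens_mul_le z B hm1 hm2
        have heq : (B ∩ Set.Icc 1 (m : ℤ)).ncard = ((Finset.Ico (1:ℤ) (c a - a)).filter (· ∈ B)).card := by
          rw [ncard_inter_Icc B 1 (m:ℤ)]
          congr 2
          ext x
          simp only [Finset.mem_Icc, Finset.mem_Ico]
          omega
        have hmr : ((m:ℕ) : ℝ) = ((c a : ℝ)) - (a:ℝ) - 1 := by exact_mod_cast hmz
        rw [← hβd] at hd
        rw [heq] at hd
        rw [← hmr]
        exact hd
    rw [hcardim, hcard0]
    push_cast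
    linarith [htail]
  -- assemble
  have hn : α * z' ≤ (F.card : ℝ) := by
    have h := dens_mul_le z A h1 h2
    rw [ncard_inter_Icc A 1 ((z':ℕ):ℤ)] at h
    rw [hF]
    exact_mod_cast h
  have hSle : ∑ a ∈ F, ((T a).card : ℝ)
      ≤ (((Finset.Icc 1 (z':ℤ)).filter (· ∈ greedySum A B)).card : ℝ) := by
    have ha' : (F.biUnion T).card = ∑ a ∈ F, (T a).card := Finset.card_biUnion hTdisj
    have hb' : (F.biUnion T) ⊆ (Finset.Icc 1 (z':ℤ)).filter (· ∈ greedySum A B) := by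
      intro x hx
      rw [Finset.mem_biUnion] at hx
      obtain ⟨a, ha, hx⟩ := hx
      exact hTsub a ha hx
    have := Finset.card_le_card hb'
    rw [ha'] at this
    exact_mod_cast this
  have hsumR : ∑ a ∈ F, (((c a : ℝ)) - a) = (z':ℝ) := by
    have := congrArg (Int.cast : ℤ → ℝ) hsum
    push_cast at this
    exact this
  have hsumlb : (F.card : ℝ) + β * ((z':ℝ) - F.card) ≤ ∑ a ∈ F, ((T a).card : ℝ) := by
    calc (F.card : ℝ) + β * ((z':ℝ) - F.card)
        = ∑ a ∈ F, ((1:ℝ) + β * (((c a : ℝ)) - a - 1)) := by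
          rw [Finset.sum_add_distrib, Finset.sum_const, ← Finset.mul_sum]
          have he : ∑ a ∈ F, (((c a:ℝ)) - a - 1) = (z':ℝ) - F.card := by
            rw [Finset.sum_sub_distrib, hsumR, Finset.sum_const]
            simp
          rw [he]
          simp
      _ ≤ ∑ a ∈ F, ((T a).card : ℝ) := Finset.sum_le_sum hcardT
  have hfin : ((greedySum A B ∩ Set.Icc 1 (z':ℤ)).ncard : ℝ)
      = (((Finset.Icc 1 (z':ℤ)).filter (· ∈ greedySum A B)).card : ℝ) := by
    rw [ncard_inter_Icc]
  rw [hfin]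
  nlinarith [mul_le_mul_of_nonneg_right hn (sub_nonneg.mpr hβ1), hSle, hsumlb]


theorem stmt1 (A B : Set ℤ) (hA : (1 : ℤ) ∈ A) (hB : (0 : ℤ) ∈ B) (z : ℕ) (hz : 1 ≤ z) :
    dens z (greedySum A B) ≥ dens z A + dens z B - dens z A * dens z B := by
  rw [ge_iff_le, dens]
  apply le_csInf
  · exact ⟨_, 1, le_rfl, hz, rfl⟩
  · rintro r ⟨z', h1, h2, rfl⟩
    have hk := key A B hA hB z z' h1 h2
    have hz' : (0:ℝ) < (z' : ℝ) := by exact_mod_cast h1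
    rw [le_div_iff₀ hz']
    exact hk
end

section
/- Let A ⊆ {0,1,...,m} be a set of integers with {0,1} ⊆ A, and let k = ⌈2/ρ_m(A)⌉ (assuming ρ_m(A) > 0). Then ρ_m(k ⊗ A) ≥ 3/4. -/
open Pointwise

lemma ncard_Icc_int (a b : ℤ) : (Set.Icc a b).ncard = (b + 1 - a).toNat := by
  rw [← Finset.coe_Icc, Set.ncard_coe_finset, Int.card_Icc]
lemma zero_mem_kGreedy {A : Set ℤ} (h0 : (0:ℤ) ∈ A) : ∀ j, (0:ℤ) ∈ kGreedy j A
  | 0 => rfl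
  | j+1 => ⟨0, h0, 0, zero_mem_kGreedy h0 j, le_refl 0, by ring,
      fun a' _ h => by simpa using h⟩
lemma mem_greedy_block {A B : Set ℤ} {astar z x : ℤ} (ha : astar ∈ A)
    (hmax : ∀ a' ∈ A, a' ≤ z → a' ≤ astar) (hx1 : astar ≤ x) (hx2 : x ≤ z) :
    x ∈ greedySum A B ↔ x - astar ∈ B := by
  constructor
  · rintro ⟨a, haA, b, hbB, hb0, rfl, hmax'⟩
    have h1 : astar ≤ a := hmax' astar ha (by linarith)
    have h2 : a ≤ astar := hmax a haA (by linarith)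
    have h3 : a = astar := le_antisymm h2 h1
    subst h3
    simpa using hbB
  · intro hb
    exact ⟨astar, ha, x - astar, hb, by linarith, by ring,
      fun a' ha' h => hmax a' ha' (by linarith)⟩
lemma block_diff_eq {A B : Set ℤ} {astar z : ℤ} (ha : astar ∈ A)
    (hmax : ∀ a' ∈ A, a' ≤ z → a' ≤ astar) :
    Set.Icc astar z \ greedySum A B = (fun x => x + astar) '' (Set.Icc 0 (z - astar) \ B) := by
  ext x
  simp only [Set.mem_diff, Set.mem_Icc, Set.mem_image]
  constructor
  · rintro ⟨⟨hx1, hx2⟩, h3⟩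
    refine ⟨x - astar, ⟨⟨by linarith, by linarith⟩, fun hb => h3 ?_⟩, by ring⟩
    exact (mem_greedy_block ha hmax hx1 hx2).mpr hb
  · rintro ⟨y, ⟨⟨hy0, hyz⟩, hyB⟩, rfl⟩
    refine ⟨⟨by linarith, by linarith⟩, fun hg => hyB ?_⟩
    have := (mem_greedy_block ha hmax (by linarith) (by linarith)).mp hg
    simpa using this

lemma miss_bound {m : ℕ} {A : Set ℤ} {ρ : ℝ} (h0 : (0:ℤ) ∈ A) (h1 : (1:ℤ) ∈ A)
    (hρ0 : 0 ≤ ρ) (hρ1 : ρ ≤ 1)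
    (hdens : ∀ n : ℕ, 1 ≤ n → n ≤ m → ρ * n ≤ ((A ∩ Set.Icc 1 (n:ℤ)).ncard : ℝ)) :
    ∀ j : ℕ, ∀ n : ℕ, n ≤ m →
      (((Set.Icc (0:ℤ) (n:ℤ) \ kGreedy j A).ncard : ℝ)) ≤ (1 - ρ)^j * n := by
  have hpow : ∀ j : ℕ, (0:ℝ) ≤ (1 - ρ)^j := fun j => pow_nonneg (by linarith) j
  intro j
  induction j with
  | zero =>
    intro n _
    have hset : Set.Icc (0:ℤ) (n:ℤ) \ kGreedy 0 A = Set.Icc 1 (n:ℤ) := by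
      ext x
      simp only [kGreedy, Set.mem_diff, Set.mem_Icc, Set.mem_singleton_iff]
      omega
    rw [hset, ncard_Icc_int]
    have hh : ((n:ℤ) + 1 - 1).toNat = n := by omega
    rw [hh]
    simp
  | succ j ihj =>
    -- inner claim by strong induction on n
    have inner : ∀ n : ℕ, n ≤ m →
        ((Set.Icc (0:ℤ) (n:ℤ) \ kGreedy (j+1) A).ncard : ℝ)
          ≤ (1-ρ)^j * ((n:ℝ) + 1 - ((A ∩ Set.Icc 0 (n:ℤ)).ncard : ℝ)) := by
      intro n
      induction n using Nat.strong_induction_on with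
      | _ n ih =>
      intro hnm
      rcases Nat.eq_zero_or_pos n with rfl | hn
      · have hs1 : Set.Icc (0:ℤ) ((0:ℕ):ℤ) \ kGreedy (j+1) A = ∅ := by
          ext x
          simp only [Nat.cast_zero, Set.mem_diff, Set.mem_Icc, Set.mem_empty_iff_false,
            iff_false, not_and, not_not]
          intro hx
          have : x = 0 := le_antisymm hx.2 hx.1
          subst this
          exact zero_mem_kGreedy h0 (j+1)
        have hs2 : A ∩ Set.Icc (0:ℤ) ((0:ℕ):ℤ) = {0} := by
          ext x
          simp only [Nat.cast_zero, Set.mem_inter_iff, Set.mem_Icc, Set.mem_singleton_iff]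
          constructor
          · rintro ⟨_, hx0, hx1⟩; omega
          · rintro rfl; exact ⟨h0, le_refl 0, le_refl 0⟩
        rw [hs1, hs2]
        simp
      · -- n ≥ 1 case
        -- find astar = max of A ∩ Icc 0 n
        have hfin : (A ∩ Set.Icc (0:ℤ) (n:ℤ)).Finite :=
          (Set.finite_Icc 0 (n:ℤ)).subset Set.inter_subset_right
        obtain ⟨a, haS, hamax⟩ := Set.exists_max_image (A ∩ Set.Icc (0:ℤ) (n:ℤ)) id hfin
          ⟨0, h0, le_refl 0, by positivity⟩
        obtain ⟨haA, ha0, han⟩ : a ∈ A ∧ 0 ≤ a ∧ a ≤ (n:ℤ) := ⟨haS.1, haS.2.1, haS.2.2⟩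
        have ha1 : 1 ≤ a := hamax 1 ⟨h1, by norm_num, by exact_mod_cast hn⟩
        have hmaxz : ∀ a' ∈ A, a' ≤ (n:ℤ) → a' ≤ a := by
          intro a' ha' hle
          rcases le_or_gt a' 0 with h | h
          · linarith
          · exact hamax a' ⟨ha', by linarith, hle⟩
        -- split the difference set
        have hkfin : ∀ (u v : ℤ) (jj : ℕ), (Set.Icc u v \ kGreedy jj A).Finite :=
          fun u v jj => (Set.finite_Icc u v).subset Set.diff_subset
        have hsplit : Set.Icc (0:ℤ) (n:ℤ) \ kGreedy (j+1) A
            = (Set.Icc (0:ℤ) (a-1) \ kGreedy (j+1) A) ∪ (Set.Icc a (n:ℤ) \ kGreedy (j+1) A) := by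
          rw [← Set.union_diff_distrib]
          congr 1
          ext x
          simp only [Set.mem_Icc, Set.mem_union]
          omega
        have hdisj : Disjoint (Set.Icc (0:ℤ) (a-1) \ kGreedy (j+1) A)
            (Set.Icc a (n:ℤ) \ kGreedy (j+1) A) := by
          rw [Set.disjoint_left]
          rintro x ⟨hx, -⟩ ⟨hx', -⟩
          simp only [Set.mem_Icc] at hx hx'
          omega
        have hcard : (Set.Icc (0:ℤ) (n:ℤ) \ kGreedy (j+1) A).ncard
            = (Set.Icc (0:ℤ) (a-1) \ kGreedy (j+1) A).ncard
              + (Set.Icc a (n:ℤ) \ kGreedy (j+1) A).ncard := by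
          rw [hsplit]
          exact Set.ncard_union_eq hdisj (hkfin _ _ _) (hkfin _ _ _)
        -- second block
        have hblock : (Set.Icc a (n:ℤ) \ kGreedy (j+1) A).ncard
            = (Set.Icc (0:ℤ) ((n:ℤ) - a) \ kGreedy j A).ncard := by
          have : Set.Icc a (n:ℤ) \ kGreedy (j+1) A
              = (fun x => x + a) '' (Set.Icc 0 ((n:ℤ) - a) \ kGreedy j A) := by
            show Set.Icc a (n:ℤ) \ greedySum A (kGreedy j A) = _
            exact block_diff_eq haA hmaxz
          rw [this, Set.ncard_image_of_injective _ (add_left_injective a)]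
        -- bound second block by outer IH
        have hna : ((((n:ℤ) - a).toNat : ℕ) : ℤ) = (n:ℤ) - a := by omega
        have hcast2 : ((((n:ℤ) - a).toNat : ℕ) : ℝ) = (n:ℝ) - (a:ℝ) := by
          rw [← Int.cast_natCast, hna]; push_cast; ring
        have h2 : ((Set.Icc (0:ℤ) ((n:ℤ) - a) \ kGreedy j A).ncard : ℝ)
            ≤ (1-ρ)^j * ((n:ℝ) - (a:ℝ)) := by
          have htmp := ihj ((n:ℤ) - a).toNat (by omega)
          rw [hna, hcast2] at htmp
          exact htmp
        -- bound first block by strong IH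
        have hto : ((((a-1).toNat : ℕ)) : ℤ) = a - 1 := by omega
        have hcast3 : ((((a-1).toNat : ℕ)) : ℝ) = (a:ℝ) - 1 := by
          rw [← Int.cast_natCast, hto]; push_cast; ring
        have h3 : ((Set.Icc (0:ℤ) (a-1) \ kGreedy (j+1) A).ncard : ℝ)
            ≤ (1-ρ)^j * (((a:ℝ) - 1) + 1 - ((A ∩ Set.Icc 0 (a-1)).ncard : ℝ)) := by
          have htmp := ih (a-1).toNat (by omega) (by omega)
          rw [hto, hcast3] at htmp
          exact htmp
        -- card relation
        have hinsert : A ∩ Set.Icc (0:ℤ) (n:ℤ) = insert a (A ∩ Set.Icc 0 (a-1)) := by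
          ext x
          simp only [Set.mem_inter_iff, Set.mem_Icc, Set.mem_insert_iff]
          constructor
          · rintro ⟨hxA, hx0, hxn⟩
            rcases eq_or_ne x a with rfl | hne
            · exact Or.inl rfl
            · have := hmaxz x hxA hxn
              exact Or.inr ⟨hxA, hx0, by omega⟩
          · rintro (rfl | ⟨hxA, hx0, hxa⟩)
            · exact ⟨haA, ha0, han⟩
            · exact ⟨hxA, hx0, by omega⟩
        have hnotmem : a ∉ A ∩ Set.Icc (0:ℤ) (a-1) := by
          rintro ⟨-, -, h⟩; omega
        have hcard2 : (A ∩ Set.Icc (0:ℤ) (n:ℤ)).ncard = (A ∩ Set.Icc 0 (a-1)).ncard + 1 := by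
          rw [hinsert, Set.ncard_insert_of_notMem hnotmem
            ((Set.finite_Icc (0:ℤ) (a-1)).subset Set.inter_subset_right)]
        -- combine
        rw [hcard, hblock, hcard2]
        push_cast
        have key : (1-ρ)^j * (((a:ℝ) - 1) + 1 - ((A ∩ Set.Icc 0 (a-1)).ncard : ℝ))
            + (1-ρ)^j * ((n:ℝ) - (a:ℝ))
            = (1-ρ)^j * ((n:ℝ) + 1 - (((A ∩ Set.Icc 0 (a-1)).ncard : ℝ) + 1)) := by ring
        linarith [h2, h3, key]
    -- deduce P (j+1) from inner
    intro n hnm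
    rcases Nat.eq_zero_or_pos n with rfl | hn
    · have h := inner 0 (by omega)
      have hs2 : A ∩ Set.Icc (0:ℤ) ((0:ℕ):ℤ) = {0} := by
        ext x
        simp only [Nat.cast_zero, Set.mem_inter_iff, Set.mem_Icc, Set.mem_singleton_iff]
        constructor
        · rintro ⟨_, hx0, hx1⟩; omega
        · rintro rfl; exact ⟨h0, le_refl 0, le_refl 0⟩
      rw [hs2] at h
      simpa using h
    · have h := inner n hnm
      have hins : A ∩ Set.Icc (0:ℤ) (n:ℤ) = insert 0 (A ∩ Set.Icc 1 (n:ℤ)) := by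
        ext x
        simp only [Set.mem_inter_iff, Set.mem_Icc, Set.mem_insert_iff]
        constructor
        · rintro ⟨hxA, hx0, hxn⟩
          rcases eq_or_ne x 0 with rfl | hne
          · exact Or.inl rfl
          · exact Or.inr ⟨hxA, by omega, hxn⟩
        · rintro (rfl | ⟨hxA, hx1, hxn⟩)
          · exact ⟨h0, le_refl 0, by positivity⟩
          · exact ⟨hxA, by omega, hxn⟩
      have hnm0 : (0:ℤ) ∉ A ∩ Set.Icc 1 (n:ℤ) := by rintro ⟨-, h, -⟩; omega
      have hcc : (A ∩ Set.Icc (0:ℤ) (n:ℤ)).ncard = (A ∩ Set.Icc 1 (n:ℤ)).ncard + 1 := by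
        rw [hins, Set.ncard_insert_of_notMem hnm0
          ((Set.finite_Icc (1:ℤ) (n:ℤ)).subset Set.inter_subset_right)]
      rw [hcc] at h
      have hd := hdens n hn hnm
      have hp := hpow j
      push_cast at h
      calc ((Set.Icc (0:ℤ) (n:ℤ) \ kGreedy (j+1) A).ncard : ℝ)
          ≤ (1-ρ)^j * ((n:ℝ) + 1 - (((A ∩ Set.Icc 1 (n:ℤ)).ncard : ℝ) + 1)) := h
        _ ≤ (1-ρ)^j * ((1 - ρ) * n) := by nlinarith
        _ = (1-ρ)^(j+1) * n := by ring

theorem stmt3 (m : ℕ) (A : Set ℤ) (hA : A ⊆ Set.Icc 0 (m : ℤ)) (h0 : (0 : ℤ) ∈ A)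
    (h1 : (1 : ℤ) ∈ A) (hρ : 0 < dens m A) (k : ℕ) (hk : (k : ℤ) = ⌈(2 : ℝ) / dens m A⌉) :
    dens m (kGreedy k A) ≥ 3 / 4 := by
  have hbdd : ∀ S : Set ℤ, BddBelow
      {r : ℝ | ∃ z' : ℕ, 1 ≤ z' ∧ z' ≤ m ∧ r = ((S ∩ Set.Icc 1 (z' : ℤ)).ncard : ℝ) / z'} := by
    intro S
    refine ⟨0, ?_⟩
    rintro r ⟨z', hz1, hzm, rfl⟩
    positivity
  have hm : 1 ≤ m := by
    by_contra hcon
    have hm0 : m = 0 := by omega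
    subst hm0
    have hempty : {r : ℝ | ∃ z' : ℕ, 1 ≤ z' ∧ z' ≤ 0 ∧
        r = ((A ∩ Set.Icc 1 (z' : ℤ)).ncard : ℝ) / z'} = ∅ := by
      ext r
      simp only [Set.mem_setOf_eq, Set.mem_empty_iff_false, iff_false]
      rintro ⟨z', hz1, hz0, -⟩
      omega
    have : dens 0 A = 0 := by
      unfold dens
      rw [hempty, Real.sInf_empty]
    rw [this] at hρ
    exact lt_irrefl 0 hρ
  set ρ := dens m A with hρdef
  have hρle : ∀ n : ℕ, 1 ≤ n → n ≤ m → ρ ≤ ((A ∩ Set.Icc 1 (n:ℤ)).ncard : ℝ) / n := by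
    intro n hn1 hnm
    exact csInf_le (hbdd A) ⟨n, hn1, hnm, rfl⟩
  have hdens : ∀ n : ℕ, 1 ≤ n → n ≤ m → ρ * n ≤ ((A ∩ Set.Icc 1 (n:ℤ)).ncard : ℝ) := by
    intro n hn1 hnm
    have hn' : (0:ℝ) < n := by exact_mod_cast hn1
    have := hρle n hn1 hnm
    rw [le_div_iff₀ hn'] at this
    linarith
  have hρ1 : ρ ≤ 1 := by
    have h := hρle 1 (le_refl 1) hm
    have hc : (A ∩ Set.Icc 1 ((1:ℕ):ℤ)).ncard ≤ 1 := by
      have := Set.ncard_le_ncard (Set.inter_subset_right (s := A) (t := Set.Icc 1 ((1:ℕ):ℤ)))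
        (Set.finite_Icc _ _)
      rwa [ncard_Icc_int, show ((1:ℕ):ℤ) + 1 - 1 = 1 by ring, Int.toNat_one] at this
    have hc' : ((A ∩ Set.Icc 1 ((1:ℕ):ℤ)).ncard : ℝ) ≤ 1 := by exact_mod_cast hc
    norm_num at h hc'
    have hfin : ((A ∩ ({1} : Set ℤ)).ncard : ℝ) ≤ 1 := by
      have h3 := hc; simp only [Nat.cast_one, Set.Icc_self] at h3; exact_mod_cast h3
    linarith
  -- k ≥ 2/ρ
  have hkge : (2:ℝ)/ρ ≤ (k:ℝ) := by
    have h' : ((k:ℤ):ℝ) = ((⌈(2:ℝ)/ρ⌉ : ℤ) : ℝ) := by rw [hk]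
    rw [Int.cast_natCast] at h'
    rw [h']
    exact Int.le_ceil _
  have hρk : 2 ≤ ρ * k := by
    rw [div_le_iff₀ hρ] at hkge
    linarith
  -- (1-ρ)^k ≤ 1/4
  have hq : (1-ρ)^k ≤ 1/4 := by
    have e1 : (1-ρ) ≤ Real.exp (-ρ) := by
      have := Real.add_one_le_exp (-ρ); linarith
    have e2 : (1-ρ)^k ≤ (Real.exp (-ρ))^k := pow_le_pow_left₀ (by linarith) e1 k
    have e3 : (Real.exp (-ρ))^k = Real.exp ((k:ℝ) * (-ρ)) := (Real.exp_nat_mul _ k).symm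
    have e4 : Real.exp ((k:ℝ)*(-ρ)) ≤ Real.exp (-2) :=
      Real.exp_le_exp.mpr (by nlinarith)
    have hexp2 : (4:ℝ) ≤ Real.exp 2 := by
      have h2 : Real.exp 2 = Real.exp 1 * Real.exp 1 := by
        rw [← Real.exp_add]; norm_num
      nlinarith [Real.exp_one_gt_d9]
    have e5 : Real.exp (-2) ≤ 1/4 := by
      rw [Real.exp_neg, show (1:ℝ)/4 = 4⁻¹ by norm_num]
      exact inv_anti₀ (by norm_num) hexp2
    linarith [e2, e3.le, e4, e5]
  have miss := miss_bound h0 h1 hρ.le hρ1 hdens k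
  -- final
  show 3/4 ≤ dens m (kGreedy k A)
  unfold dens
  apply le_csInf
  · exact ⟨_, 1, le_refl 1, hm, rfl⟩
  · rintro r ⟨z', hz1, hzm, rfl⟩
    have hz' : (0:ℝ) < z' := by exact_mod_cast hz1
    rw [le_div_iff₀ hz']
    have hsub : Set.Icc (1:ℤ) (z':ℤ) ⊆
        (kGreedy k A ∩ Set.Icc 1 (z':ℤ)) ∪ (Set.Icc 0 (z':ℤ) \ kGreedy k A) := by
      intro x hx
      rw [Set.mem_Icc] at hx
      by_cases hxk : x ∈ kGreedy k A
      · exact Or.inl ⟨hxk, Set.mem_Icc.mpr hx⟩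
      · exact Or.inr ⟨Set.mem_Icc.mpr ⟨by linarith [hx.1], hx.2⟩, hxk⟩
    have hc1 : (Set.Icc (1:ℤ) (z':ℤ)).ncard = z' := by
      rw [ncard_Icc_int]; omega
    have hfin1 : (kGreedy k A ∩ Set.Icc 1 (z':ℤ)).Finite :=
      (Set.finite_Icc _ _).subset Set.inter_subset_right
    have hfin2 : (Set.Icc (0:ℤ) (z':ℤ) \ kGreedy k A).Finite :=
      (Set.finite_Icc _ _).subset Set.diff_subset
    have hcount : (z' : ℕ) ≤ (kGreedy k A ∩ Set.Icc 1 (z':ℤ)).ncard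
        + (Set.Icc 0 (z':ℤ) \ kGreedy k A).ncard := by
      calc z' = (Set.Icc (1:ℤ) (z':ℤ)).ncard := hc1.symm
        _ ≤ ((kGreedy k A ∩ Set.Icc 1 (z':ℤ)) ∪ (Set.Icc 0 (z':ℤ) \ kGreedy k A)).ncard :=
            Set.ncard_le_ncard hsub (hfin1.union hfin2)
        _ ≤ _ := Set.ncard_union_le _ _
    have hcountR : (z' : ℝ) ≤ ((kGreedy k A ∩ Set.Icc 1 (z':ℤ)).ncard : ℝ)
        + ((Set.Icc 0 (z':ℤ) \ kGreedy k A).ncard : ℝ) := by exact_mod_cast hcount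
    have hmiss := miss z' hzm
    have hquarter : ((Set.Icc 0 (z':ℤ) \ kGreedy k A).ncard : ℝ) ≤ (1/4) * z' := by
      calc ((Set.Icc 0 (z':ℤ) \ kGreedy k A).ncard : ℝ) ≤ (1-ρ)^k * z' := hmiss
        _ ≤ (1/4) * z' := by
            apply mul_le_mul_of_nonneg_right hq (by positivity)
    linarith
end

section
/- Let A ⊆ {0,1,...,m} with {0,1} ⊆ A. If k is a positive integer with k ≥ 1/ρ_m(A) (assuming ρ_m(A) > 0), then {0, 1, ..., m} ⊆ kA. -/
open Pointwise

namespace SumCover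


noncomputable def cnt (S : Finset ℤ) (z : ℤ) : ℕ := (S ∩ Finset.Icc 1 z).card

def msum (M : Multiset (Finset ℤ)) : Set ℤ := (M.map (fun F => (F : Set ℤ))).sum

noncomputable def tot (A₁ : Finset ℤ) (M : Multiset (Finset ℤ)) (z : ℤ) : ℕ :=
  cnt A₁ z + (M.map (fun S => cnt S z)).sum

lemma cnt_mono (S : Finset ℤ) {z w : ℤ} (h : z ≤ w) : cnt S z ≤ cnt S w :=
  Finset.card_le_card (Finset.inter_subset_inter subset_rfl (Finset.Icc_subset_Icc le_rfl h))

lemma cnt_cast_le (S : Finset ℤ) {z : ℤ} (hz : 0 ≤ z) : (cnt S z : ℤ) ≤ z := by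
  have h1 : cnt S z ≤ (Finset.Icc (1:ℤ) z).card :=
    Finset.card_le_card (Finset.inter_subset_right)
  have h2 : (Finset.Icc (1:ℤ) z).card = (z + 1 - 1).toNat := Int.card_Icc 1 z
  have := h1.trans_eq h2
  omega

lemma cnt_not_mem {S : Finset ℤ} {z : ℤ} (h1 : 1 ≤ z) (hz : z ∉ S) :
    (cnt S z : ℤ) ≤ z - 1 := by
  have hsub : S ∩ Finset.Icc 1 z ⊆ Finset.Icc 1 (z - 1) := by
    intro x hx
    obtain ⟨hxS, hxI⟩ := Finset.mem_inter.mp hx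
    obtain ⟨ha, hb⟩ := Finset.mem_Icc.mp hxI
    have : x ≠ z := fun h => hz (h ▸ hxS)
    exact Finset.mem_Icc.mpr ⟨ha, by omega⟩
  have h2 : cnt S z ≤ (Finset.Icc (1:ℤ) (z-1)).card := Finset.card_le_card hsub
  have h3 : (Finset.Icc (1:ℤ) (z-1)).card = (z - 1 + 1 - 1).toNat := Int.card_Icc 1 (z-1)
  have := h2.trans_eq h3
  omega

lemma cnt_step {S : Finset ℤ} {z : ℤ} (hz : z ∈ S) (h1 : 1 ≤ z) :
    cnt S (z - 1) + 1 ≤ cnt S z := by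
  have hsub : insert z (S ∩ Finset.Icc 1 (z-1)) ⊆ S ∩ Finset.Icc 1 z := by
    intro x hx
    rcases Finset.mem_insert.mp hx with rfl | hx
    · exact Finset.mem_inter.mpr ⟨hz, Finset.mem_Icc.mpr ⟨h1, le_rfl⟩⟩
    · obtain ⟨hxS, hxI⟩ := Finset.mem_inter.mp hx
      obtain ⟨ha, hb⟩ := Finset.mem_Icc.mp hxI
      exact Finset.mem_inter.mpr ⟨hxS, Finset.mem_Icc.mpr ⟨ha, by omega⟩⟩
  have hnm : z ∉ S ∩ Finset.Icc 1 (z-1) := by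
    intro h
    have := Finset.mem_Icc.mp (Finset.mem_inter.mp h).2
    omega
  calc cnt S (z-1) + 1 = (insert z (S ∩ Finset.Icc 1 (z-1))).card :=
        (Finset.card_insert_of_notMem hnm).symm
    _ ≤ cnt S z := Finset.card_le_card hsub

lemma sum_cnt_mono (M : Multiset (Finset ℤ)) {z w : ℤ} (h : z ≤ w) :
    (M.map (fun S => cnt S z)).sum ≤ (M.map (fun S => cnt S w)).sum := by
  refine Multiset.sum_map_le_sum_map _ _ (fun S _ => cnt_mono S h)

lemma msum_cons (S : Finset ℤ) (M : Multiset (Finset ℤ)) :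
    msum (S ::ₘ M) = (S : Set ℤ) + msum M := by
  simp [msum]

lemma zero_mem_msum {M : Multiset (Finset ℤ)} (h : ∀ S ∈ M, (0:ℤ) ∈ S) :
    (0:ℤ) ∈ msum M := by
  induction M using Multiset.induction_on with
  | empty => simp [msum]
  | cons S M ih =>
    rw [msum_cons]
    exact ⟨0, h S (Multiset.mem_cons_self S M), 0,
      ih (fun T hT => h T (Multiset.mem_cons_of_mem hT)), by ring⟩


lemma main (n : ℤ) (hn : 1 ≤ n) :
    ∀ (N : ℕ) (A₁ : Finset ℤ) (M : Multiset (Finset ℤ)),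
      (M.map Finset.card).sum ≤ N →
      (0:ℤ) ∈ A₁ → (1:ℤ) ∈ A₁ →
      (↑A₁ : Set ℤ) ⊆ Set.Icc 0 n →
      (∀ S ∈ M, (0:ℤ) ∈ S ∧ S ⊆ A₁) →
      (∀ z : ℤ, 0 ≤ z → z ≤ n → z ≤ (tot A₁ M z : ℤ)) →
      n ∈ (↑A₁ : Set ℤ) + msum M := by
  intro N
  induction N using Nat.strong_induction_on with
  | _ N IH =>
  intro A₁ M hsum h0 h1 hsub hM hH
  classical
  set E := A₁.filter (fun e => 1 ≤ e ∧ ∃ S ∈ M, ∃ x ∈ S, x + e ∉ A₁) with hE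
  rcases E.eq_empty_or_nonempty with hEe | hEne
  · -- terminal case
    have hS0 : ∀ S ∈ M, ∀ x ∈ S, x = 0 := by
      intro S hS x hx
      set P := A₁.filter (fun a => 1 ≤ a) with hP
      have hPne : P.Nonempty := ⟨1, Finset.mem_filter.mpr ⟨h1, le_rfl⟩⟩
      set e := P.max' hPne with he
      have heP : e ∈ P := P.max'_mem hPne
      have heA : e ∈ A₁ := (Finset.mem_filter.mp heP).1
      have he1 : (1:ℤ) ≤ e := (Finset.mem_filter.mp heP).2
      have hnotE : e ∉ E := by rw [hEe]; exact Finset.notMem_empty e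
      have hxe : x + e ∈ A₁ := by
        by_contra hc
        exact hnotE (Finset.mem_filter.mpr ⟨heA, he1, S, hS, x, hx, hc⟩)
      have hx0 : 0 ≤ x := (hsub ((hM S hS).2 hx)).1
      have : x + e ∈ P := Finset.mem_filter.mpr ⟨hxe, by omega⟩
      have := P.le_max' _ this
      omega
    have hcnt0 : ∀ S ∈ M, ∀ z : ℤ, cnt S z = 0 := by
      intro S hS z
      rw [cnt, Finset.card_eq_zero, Finset.eq_empty_iff_forall_notMem]
      intro x hx
      obtain ⟨hxS, hxI⟩ := Finset.mem_inter.mp hx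
      have := hS0 S hS x hxS
      have := Finset.mem_Icc.mp hxI
      omega
    have hnA : n ∈ A₁ := by
      by_contra hc
      have h := hH n (by omega) le_rfl
      have hz : (M.map (fun S => cnt S n)).sum = 0 :=
        Multiset.sum_eq_zero (by
          intro a ha
          obtain ⟨S, hS, rfl⟩ := Multiset.mem_map.mp ha
          exact hcnt0 S hS n)
      rw [tot, hz] at h
      have := cnt_not_mem hn hc
      omega
    exact ⟨n, hnA, 0, zero_mem_msum (fun S hS => (hM S hS).1), by ring⟩
  · -- step case
    set e := E.min' hEne with hedef
    have heE : e ∈ E := E.min'_mem hEne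
    obtain ⟨heA₁, he1, S₀, hS₀M, x₀, hx₀S, hx₀e⟩ := Finset.mem_filter.mp heE
    have hinert : ∀ j : ℤ, j ∈ A₁ → 1 ≤ j → j < e → ∀ S ∈ M, ∀ x ∈ S, x + j ∈ A₁ := by
      intro j hj h1j hjlt S hS x hx
      by_contra hxa
      have hjE : j ∈ E := Finset.mem_filter.mpr ⟨hj, h1j, S, hS, x, hx, hxa⟩
      exact absurd (E.min'_le j hjE) (not_le.mpr hjlt)
    have hen : e ≤ n := (hsub heA₁).2
    -- interval lemma
    have hintervalW : ∀ (w : ℕ) (y : ℤ), 1 ≤ y → y ≤ e → y.toNat ≤ w → y ∈ A₁ := by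
      intro w
      induction w with
      | zero => intro y hy1 _ hw; omega
      | succ w ih =>
        intro y hy1 hye hyw
        by_contra hyA
        have hScnt : ∀ S ∈ M, cnt S y = 0 := by
          intro S hS
          rw [cnt, Finset.card_eq_zero, Finset.eq_empty_iff_forall_notMem]
          intro x hx
          obtain ⟨hxS, hxI⟩ := Finset.mem_inter.mp hx
          obtain ⟨hx1, hxy⟩ := Finset.mem_Icc.mp hxI
          have hxA : x ∈ A₁ := (hM S hS).2 hxS
          have hxny : x ≠ y := fun h => hyA (h ▸ hxA)
          have hjA : y - x ∈ A₁ := ih (y - x) (by omega) (by omega) (by omega)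
          have := hinert (y - x) hjA (by omega) (by omega) S hS x hxS
          have hxx : x + (y - x) = y := by ring
          rw [hxx] at this
          exact hyA this
        have h := hH y (by omega) (by omega)
        have hz : (M.map (fun S => cnt S y)).sum = 0 :=
          Multiset.sum_eq_zero (by
            intro a ha
            obtain ⟨S, hS, rfl⟩ := Multiset.mem_map.mp ha
            exact hScnt S hS)
        rw [tot, hz] at h
        have := cnt_not_mem hy1 hyA
        omega
    have hinterval : ∀ y : ℤ, 1 ≤ y → y ≤ e → y ∈ A₁ :=
      fun y hy1 hye => hintervalW y.toNat y hy1 hye le_rfl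
    set M₀ := M.erase S₀ with hM₀
    have hMeq : S₀ ::ₘ M₀ = M := Multiset.cons_erase hS₀M
    have hM₀mem : ∀ S ∈ M₀, S ∈ M := fun S hS => Multiset.mem_of_mem_erase hS
    have hS₀A₁ : S₀ ⊆ A₁ := (hM S₀ hS₀M).2
    set X := S₀.filter (fun x => x + e ∉ A₁) with hX
    set B' := S₀.filter (fun x => x + e ∈ A₁) with hB'
    set Y := (X.filter (fun x => x + e ≤ n)).image (· + e) with hY
    set A₁' := A₁ ∪ Y with hA₁'
    have hXS₀ : X ⊆ S₀ := Finset.filter_subset _ _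
    have hX1 : ∀ x ∈ X, 1 ≤ x := by
      intro x hx
      obtain ⟨hxS, hxe⟩ := Finset.mem_filter.mp hx
      have hx0 : 0 ≤ x := (hsub (hS₀A₁ hxS)).1
      rcases eq_or_lt_of_le hx0 with h | h
      · exfalso; apply hxe; rw [← h]; simpa using heA₁
      · omega
    -- decomposition of tot
    have htotdec : ∀ z : ℤ, tot A₁ M z
        = cnt A₁ z + (cnt S₀ z + (M₀.map (fun S => cnt S z)).sum) := by
      intro z
      rw [tot, ← hMeq, Multiset.map_cons, Multiset.sum_cons]
    -- key inequality (pre-transform)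
    have hKey : ∀ z : ℤ, 0 ≤ z → z ≤ n →
        z + ((X ∩ Finset.Ioc (z - e) z).card : ℤ) ≤ (tot A₁ M z : ℤ) := by
      intro z h0z hzn
      rcases (X ∩ Finset.Ioc (z - e) z).eq_empty_or_nonempty with hDe | hDne
      · rw [hDe]; simpa using hH z h0z hzn
      · set D := X ∩ Finset.Ioc (z - e) z with hD
        set x₁ := D.min' hDne with hx₁def
        have hx₁D : x₁ ∈ D := D.min'_mem hDne
        have hx₁X : x₁ ∈ X := (Finset.mem_inter.mp hx₁D).1
        obtain ⟨hx₁a, hx₁b⟩ := Finset.mem_Ioc.mp (Finset.mem_inter.mp hx₁D).2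
        have hx₁S₀ : x₁ ∈ S₀ := hXS₀ hx₁X
        have hx₁A₁ : x₁ ∈ A₁ := hS₀A₁ hx₁S₀
        have hx₁1 : 1 ≤ x₁ := hX1 x₁ hx₁X
        -- (a)
        have ha : cnt A₁ x₁ + (z - x₁).toNat ≤ cnt A₁ z := by
          have hIocsub : Finset.Ioc x₁ z ⊆ A₁ ∩ Finset.Icc 1 z := by
            intro y hy
            obtain ⟨hy1, hy2⟩ := Finset.mem_Ioc.mp hy
            have hjA : y - x₁ ∈ A₁ := hinterval (y - x₁) (by omega) (by omega)
            have hyA : y ∈ A₁ := by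
              have := hinert (y - x₁) hjA (by omega) (by omega) S₀ hS₀M x₁ hx₁S₀
              have hxx : x₁ + (y - x₁) = y := by ring
              rwa [hxx] at this
            exact Finset.mem_inter.mpr ⟨hyA, Finset.mem_Icc.mpr ⟨by omega, hy2⟩⟩
          have hdisj : Disjoint (A₁ ∩ Finset.Icc 1 x₁) (Finset.Ioc x₁ z) := by
            rw [Finset.disjoint_left]
            intro a ha1 ha2
            have := Finset.mem_Icc.mp (Finset.mem_inter.mp ha1).2
            have := Finset.mem_Ioc.mp ha2
            omega
          have hcup : (A₁ ∩ Finset.Icc 1 x₁) ∪ Finset.Ioc x₁ z ⊆ A₁ ∩ Finset.Icc 1 z := by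
            apply Finset.union_subset _ hIocsub
            exact Finset.inter_subset_inter subset_rfl (Finset.Icc_subset_Icc le_rfl hx₁b)
          calc cnt A₁ x₁ + (z - x₁).toNat
              = (A₁ ∩ Finset.Icc 1 x₁).card + (Finset.Ioc x₁ z).card := by
                rw [Int.card_Ioc]; rfl
            _ = ((A₁ ∩ Finset.Icc 1 x₁) ∪ Finset.Ioc x₁ z).card :=
                (Finset.card_union_of_disjoint hdisj).symm
            _ ≤ cnt A₁ z := Finset.card_le_card hcup
        -- (b)
        have hb : cnt S₀ x₁ + (D.card - 1) ≤ cnt S₀ z := by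
          have hesub : D.erase x₁ ⊆ S₀ ∩ Finset.Icc 1 z := by
            intro y hy
            have hyD : y ∈ D := Finset.mem_of_mem_erase hy
            have hyne : y ≠ x₁ := Finset.ne_of_mem_erase hy
            have hyX : y ∈ X := (Finset.mem_inter.mp hyD).1
            have := Finset.mem_Ioc.mp (Finset.mem_inter.mp hyD).2
            exact Finset.mem_inter.mpr ⟨hXS₀ hyX,
              Finset.mem_Icc.mpr ⟨by have := hX1 y hyX; omega, this.2⟩⟩
          have hdisj : Disjoint (S₀ ∩ Finset.Icc 1 x₁) (D.erase x₁) := by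
            rw [Finset.disjoint_left]
            intro a ha1 ha2
            have h1' := Finset.mem_Icc.mp (Finset.mem_inter.mp ha1).2
            have hane : a ≠ x₁ := Finset.ne_of_mem_erase ha2
            have : x₁ ≤ a := D.min'_le a (Finset.mem_of_mem_erase ha2)
            omega
          have hcup : (S₀ ∩ Finset.Icc 1 x₁) ∪ D.erase x₁ ⊆ S₀ ∩ Finset.Icc 1 z := by
            apply Finset.union_subset _ hesub
            exact Finset.inter_subset_inter subset_rfl (Finset.Icc_subset_Icc le_rfl hx₁b)
          calc cnt S₀ x₁ + (D.card - 1)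
              = (S₀ ∩ Finset.Icc 1 x₁).card + (D.erase x₁).card := by
                rw [Finset.card_erase_of_mem hx₁D]; rfl
            _ = ((S₀ ∩ Finset.Icc 1 x₁) ∪ D.erase x₁).card :=
                (Finset.card_union_of_disjoint hdisj).symm
            _ ≤ cnt S₀ z := Finset.card_le_card hcup
        -- (c)
        have hH1 := hH (x₁ - 1) (by omega) (by omega)
        rw [htotdec (x₁ - 1)] at hH1
        have hA := cnt_step hx₁A₁ hx₁1
        have hB := cnt_step hx₁S₀ hx₁1
        have hmono := sum_cnt_mono M₀ (show x₁ - 1 ≤ x₁ by omega)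
        have hDpos : 1 ≤ D.card := Finset.card_pos.mpr hDne
        have hmono2 := sum_cnt_mono M₀ hx₁b
        rw [htotdec z]
        have e1 : (cnt A₁ (x₁-1) : ℤ) + 1 ≤ (cnt A₁ x₁ : ℤ) := by exact_mod_cast hA
        have e2 : (cnt S₀ (x₁-1) : ℤ) + 1 ≤ (cnt S₀ x₁ : ℤ) := by exact_mod_cast hB
        have e3 : ((M₀.map (fun S => cnt S (x₁-1))).sum : ℤ)
            ≤ ((M₀.map (fun S => cnt S x₁)).sum : ℤ) := by exact_mod_cast hmono
        have e4 : x₁ - 1 ≤ (cnt A₁ (x₁-1) : ℤ) + ((cnt S₀ (x₁-1) : ℤ)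
            + ((M₀.map (fun S => cnt S (x₁-1))).sum : ℤ)) := by exact_mod_cast hH1
        have e5 : ((M₀.map (fun S => cnt S x₁)).sum : ℤ)
            ≤ ((M₀.map (fun S => cnt S z)).sum : ℤ) := by exact_mod_cast hmono2
        have ha' : (cnt A₁ x₁ : ℤ) + (z - x₁) ≤ (cnt A₁ z : ℤ) := by
          have hcast : ((z - x₁).toNat : ℤ) = z - x₁ := Int.toNat_of_nonneg (by omega)
          have : ((cnt A₁ x₁ + (z - x₁).toNat : ℕ) : ℤ) ≤ (cnt A₁ z : ℤ) := by
            exact_mod_cast ha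
          push_cast at this
          omega
        have hb' : (cnt S₀ x₁ : ℤ) + ((D.card : ℤ) - 1) ≤ (cnt S₀ z : ℤ) := by
          have : ((cnt S₀ x₁ + (D.card - 1) : ℕ) : ℤ) ≤ (cnt S₀ z : ℤ) := by
            exact_mod_cast hb
          have hD1 : ((D.card - 1 : ℕ) : ℤ) = (D.card : ℤ) - 1 := by
            have := hDpos; push_cast [Nat.cast_sub this]; ring
          omega
        have final : z + (D.card : ℤ) ≤ (cnt A₁ z : ℤ) + ((cnt S₀ z : ℤ)
            + ((M₀.map (fun S => cnt S z)).sum : ℤ)) := by omega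
        exact_mod_cast final
    -- new state
    have hB'S₀ : B' ⊆ S₀ := Finset.filter_subset _ _
    have hYsub : ∀ u ∈ Y, ∃ x ∈ X, x + e ≤ n ∧ x + e = u := by
      intro u hu
      obtain ⟨x, hx, rfl⟩ := Finset.mem_image.mp hu
      obtain ⟨hxX, hxn⟩ := Finset.mem_filter.mp hx
      exact ⟨x, hxX, hxn, rfl⟩
    -- H for new state
    have hH' : ∀ z : ℤ, 0 ≤ z → z ≤ n → z ≤ (tot A₁' (B' ::ₘ M₀) z : ℤ) := by
      intro z h0z hzn
      set W := X.filter (fun x => x + e ≤ z) with hW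
      have h2a : cnt A₁ z + W.card ≤ cnt A₁' z := by
        have himg : W.image (· + e) ⊆ A₁' ∩ Finset.Icc 1 z := by
          intro u hu
          obtain ⟨x, hx, rfl⟩ := Finset.mem_image.mp hu
          obtain ⟨hxX, hxz⟩ := Finset.mem_filter.mp hx
          have hxY : x + e ∈ Y := Finset.mem_image.mpr
            ⟨x, Finset.mem_filter.mpr ⟨hxX, by omega⟩, rfl⟩
          refine Finset.mem_inter.mpr ⟨Finset.mem_union_right _ hxY,
            Finset.mem_Icc.mpr ⟨by have := hX1 x hxX; omega, hxz⟩⟩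
        have hdisj : Disjoint (A₁ ∩ Finset.Icc 1 z) (W.image (· + e)) := by
          rw [Finset.disjoint_left]
          intro a ha1 ha2
          obtain ⟨x, hx, rfl⟩ := Finset.mem_image.mp ha2
          have hxX : x ∈ X := (Finset.mem_filter.mp hx).1
          exact (Finset.mem_filter.mp hxX).2 (Finset.mem_inter.mp ha1).1
        have hcup : (A₁ ∩ Finset.Icc 1 z) ∪ W.image (· + e) ⊆ A₁' ∩ Finset.Icc 1 z := by
          apply Finset.union_subset _ himg
          exact Finset.inter_subset_inter Finset.subset_union_left subset_rfl
        have hcard : (W.image (· + e)).card = W.card :=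
          Finset.card_image_of_injective _ (add_left_injective e)
        calc cnt A₁ z + W.card
            = (A₁ ∩ Finset.Icc 1 z).card + (W.image (· + e)).card := by rw [hcard]; rfl
          _ = ((A₁ ∩ Finset.Icc 1 z) ∪ W.image (· + e)).card :=
              (Finset.card_union_of_disjoint hdisj).symm
          _ ≤ cnt A₁' z := Finset.card_le_card hcup
      have h2b : cnt S₀ z ≤ cnt B' z + (X ∩ Finset.Icc 1 z).card := by
        have hsub2 : S₀ ∩ Finset.Icc 1 z ⊆ (B' ∩ Finset.Icc 1 z) ∪ (X ∩ Finset.Icc 1 z) := by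
          intro x hx
          obtain ⟨hxS, hxI⟩ := Finset.mem_inter.mp hx
          by_cases hc : x + e ∈ A₁
          · exact Finset.mem_union_left _ (Finset.mem_inter.mpr
              ⟨Finset.mem_filter.mpr ⟨hxS, hc⟩, hxI⟩)
          · exact Finset.mem_union_right _ (Finset.mem_inter.mpr
              ⟨Finset.mem_filter.mpr ⟨hxS, hc⟩, hxI⟩)
        calc cnt S₀ z ≤ ((B' ∩ Finset.Icc 1 z) ∪ (X ∩ Finset.Icc 1 z)).card :=
              Finset.card_le_card hsub2
          _ ≤ cnt B' z + (X ∩ Finset.Icc 1 z).card := Finset.card_union_le _ _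
      have h2c : (X ∩ Finset.Icc 1 z).card ≤ W.card + (X ∩ Finset.Ioc (z - e) z).card := by
        have hsub3 : X ∩ Finset.Icc 1 z ⊆ W ∪ (X ∩ Finset.Ioc (z - e) z) := by
          intro x hx
          obtain ⟨hxX, hxI⟩ := Finset.mem_inter.mp hx
          obtain ⟨hx1, hxz⟩ := Finset.mem_Icc.mp hxI
          by_cases hc : x + e ≤ z
          · exact Finset.mem_union_left _ (Finset.mem_filter.mpr ⟨hxX, hc⟩)
          · exact Finset.mem_union_right _ (Finset.mem_inter.mpr
              ⟨hxX, Finset.mem_Ioc.mpr ⟨by omega, hxz⟩⟩)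
        calc (X ∩ Finset.Icc 1 z).card
            ≤ (W ∪ (X ∩ Finset.Ioc (z - e) z)).card := Finset.card_le_card hsub3
          _ ≤ W.card + (X ∩ Finset.Ioc (z - e) z).card := Finset.card_union_le _ _
      have hkey := hKey z h0z hzn
      rw [htotdec z] at hkey
      have htot' : tot A₁' (B' ::ₘ M₀) z
          = cnt A₁' z + (cnt B' z + (M₀.map (fun S => cnt S z)).sum) := by
        rw [tot, Multiset.map_cons, Multiset.sum_cons]
      rw [htot']
      have c2a : (cnt A₁ z : ℤ) + (W.card : ℤ) ≤ (cnt A₁' z : ℤ) := by exact_mod_cast h2a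
      have c2b : (cnt S₀ z : ℤ) ≤ (cnt B' z : ℤ) + ((X ∩ Finset.Icc 1 z).card : ℤ) := by
        exact_mod_cast h2b
      have c2c : ((X ∩ Finset.Icc 1 z).card : ℤ) ≤ (W.card : ℤ)
          + ((X ∩ Finset.Ioc (z - e) z).card : ℤ) := by exact_mod_cast h2c
      have ckey : z + ((X ∩ Finset.Ioc (z - e) z).card : ℤ) ≤ (cnt A₁ z : ℤ)
          + ((cnt S₀ z : ℤ) + ((M₀.map (fun S => cnt S z)).sum : ℤ)) := by
        exact_mod_cast hkey
      have final : z ≤ (cnt A₁' z : ℤ) + ((cnt B' z : ℤ)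
          + ((M₀.map (fun S => cnt S z)).sum : ℤ)) := by omega
      exact_mod_cast final
    -- invariants for new state
    have h0' : (0:ℤ) ∈ A₁' := Finset.mem_union_left _ h0
    have h1' : (1:ℤ) ∈ A₁' := Finset.mem_union_left _ h1
    have hsub' : (↑A₁' : Set ℤ) ⊆ Set.Icc 0 n := by
      intro u hu
      rw [Finset.coe_union] at hu
      rcases hu with hu | hu
      · exact hsub hu
      · obtain ⟨x, hxX, hxn, rfl⟩ := hYsub u hu
        have hx1 := hX1 x hxX
        exact Set.mem_Icc.mpr ⟨by omega, hxn⟩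
    have hM' : ∀ S ∈ (B' ::ₘ M₀), (0:ℤ) ∈ S ∧ S ⊆ A₁' := by
      intro S hS
      rcases Multiset.mem_cons.mp hS with rfl | hS
      · constructor
        · exact Finset.mem_filter.mpr ⟨(hM S₀ hS₀M).1, by simpa using heA₁⟩
        · exact fun x hx => Finset.mem_union_left _ (hS₀A₁ (hB'S₀ hx))
      · obtain ⟨ha, hb⟩ := hM S (hM₀mem S hS)
        exact ⟨ha, fun x hx => Finset.mem_union_left _ (hb hx)⟩
    -- potential decreases
    have hcard' : ((B' ::ₘ M₀).map Finset.card).sum < (M.map Finset.card).sum := by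
      rw [← hMeq, Multiset.map_cons, Multiset.sum_cons, Multiset.map_cons,
        Multiset.sum_cons]
      have hlt : B'.card < S₀.card := by
        apply Finset.card_lt_card
        constructor
        · exact hB'S₀
        · intro hcon
          exact hx₀e (Finset.mem_filter.mp (hcon hx₀S)).2
      omega
    have hNlt : ((B' ::ₘ M₀).map Finset.card).sum < N := lt_of_lt_of_le hcard' hsum
    -- apply IH
    have hmem := IH _ hNlt A₁' (B' ::ₘ M₀) le_rfl h0' h1' hsub' hM' hH'
    -- transport back through the transform
    have hcore : (↑A₁' : Set ℤ) + (↑B' : Set ℤ) ⊆ (↑A₁ : Set ℤ) + (↑S₀ : Set ℤ) := by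
      rintro w ⟨u, hu, v, hv, rfl⟩
      have hvB : v ∈ B' := hv
      have hvS₀ : v ∈ S₀ := hB'S₀ hvB
      have hve : v + e ∈ A₁ := (Finset.mem_filter.mp hvB).2
      rw [Finset.coe_union] at hu
      rcases hu with hu | hu
      · exact ⟨u, hu, v, hvS₀, rfl⟩
      · obtain ⟨x, hxX, hxn, rfl⟩ := hYsub u hu
        exact ⟨v + e, hve, x, hXS₀ hxX, by ring⟩
    have hstep : (↑A₁' : Set ℤ) + msum (B' ::ₘ M₀) ⊆ (↑A₁ : Set ℤ) + msum M := by
      rw [← hMeq, msum_cons, msum_cons, ← add_assoc, ← add_assoc]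
      exact Set.add_subset_add hcore subset_rfl
    exact hstep hmem


lemma zero_mem_kFold (A : Set ℤ) (h0 : (0:ℤ) ∈ A) : ∀ k, (0:ℤ) ∈ kFold k A := by
  intro k
  induction k with
  | zero => simp [kFold]
  | succ k ih => exact ⟨0, h0, 0, ih, by ring⟩

lemma msum_replicate_subset (A : Set ℤ) (F : Finset ℤ) (hFA : (↑F : Set ℤ) ⊆ A) :
    ∀ j, msum (Multiset.replicate j F) ⊆ kFold j A := by
  intro j
  induction j with
  | zero =>
    intro x hx
    simp only [Multiset.replicate_zero, msum, Multiset.map_zero, Multiset.sum_zero] at hx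
    simpa [kFold] using hx
  | succ j ih =>
    rw [Multiset.replicate_succ, msum_cons]
    exact Set.add_subset_add hFA ih

end SumCover

open SumCover in
theorem stmt5 (m : ℕ) (A : Set ℤ) (hA : A ⊆ Set.Icc 0 (m : ℤ)) (h0 : (0 : ℤ) ∈ A)
    (h1 : (1 : ℤ) ∈ A) (hρ : 0 < dens m A) (k : ℕ) (hk : 1 ≤ k)
    (hkρ : (k : ℝ) ≥ 1 / dens m A) :
    Set.Icc (0 : ℤ) (m : ℤ) ⊆ kFold k A := by
  obtain ⟨k', rfl⟩ : ∃ k', k = k' + 1 := ⟨k - 1, by omega⟩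
  intro x hx
  obtain ⟨hx0, hxm⟩ := Set.mem_Icc.mp hx
  rcases eq_or_lt_of_le hx0 with h | hxpos
  · rw [← h]; exact zero_mem_kFold A h0 _
  -- setup
  set n := x with hn
  have hfin : (A ∩ Set.Icc 0 n).Finite :=
    (Set.finite_Icc (0:ℤ) n).subset Set.inter_subset_right
  set F := hfin.toFinset with hF
  have hFcoe : (↑F : Set ℤ) = A ∩ Set.Icc 0 n := hfin.coe_toFinset
  have hFA : (↑F : Set ℤ) ⊆ A := by rw [hFcoe]; exact Set.inter_subset_left
  have h0F : (0:ℤ) ∈ F := hfin.mem_toFinset.mpr ⟨h0, Set.mem_Icc.mpr ⟨le_rfl, by omega⟩⟩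
  have h1F : (1:ℤ) ∈ F := hfin.mem_toFinset.mpr ⟨h1, Set.mem_Icc.mpr ⟨by omega, by omega⟩⟩
  have hFsub : (↑F : Set ℤ) ⊆ Set.Icc 0 n := by rw [hFcoe]; exact Set.inter_subset_right
  -- density facts
  have hbdd : BddBelow {r : ℝ | ∃ z' : ℕ, 1 ≤ z' ∧ z' ≤ m ∧
      r = (A ∩ Set.Icc 1 (z' : ℤ)).ncard / z'} := by
    refine ⟨0, fun r hr => ?_⟩
    obtain ⟨z', _, _, rfl⟩ := hr
    positivity
  have hcnt : ∀ z : ℤ, 1 ≤ z → z ≤ n → (z : ℤ) ≤ (k' + 1 : ℕ) * (cnt F z : ℤ) := by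
    intro z h1z hzn
    have hzm : z ≤ (m:ℤ) := le_trans hzn hxm
    have hsetEq : A ∩ Set.Icc 1 z = (↑(F ∩ Finset.Icc 1 z) : Set ℤ) := by
      push_cast
      rw [hFcoe]
      ext t
      simp only [Set.mem_inter_iff, Set.mem_Icc, Finset.coe_Icc]
      constructor
      · rintro ⟨ht, h1t, htz⟩
        exact ⟨⟨ht, by omega, by omega⟩, by omega, by omega⟩
      · rintro ⟨⟨ht, _, _⟩, h1t, htz⟩
        exact ⟨ht, h1t, htz⟩
    have hncard : (A ∩ Set.Icc 1 z).ncard = cnt F z := by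
      rw [hsetEq, Set.ncard_coe_finset]; rfl
    have hmem : ((A ∩ Set.Icc 1 (z.toNat : ℤ)).ncard : ℝ) / (z.toNat : ℝ) ∈
        {r : ℝ | ∃ z' : ℕ, 1 ≤ z' ∧ z' ≤ m ∧ r = (A ∩ Set.Icc 1 (z' : ℤ)).ncard / z'} :=
      ⟨z.toNat, by omega, by omega, rfl⟩
    have hsinf := csInf_le hbdd hmem
    have hzz : ((z.toNat : ℤ) : ℤ) = z := by omega
    rw [show ((z.toNat : ℕ) : ℤ) = z by omega] at hmem
    have hcast : ((z.toNat : ℕ) : ℝ) = (z : ℝ) := by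
      exact_mod_cast congrArg (fun t : ℤ => (t : ℝ)) (show ((z.toNat : ℕ) : ℤ) = z by omega)
    rw [show ((z.toNat : ℕ) : ℤ) = z from by omega] at hsinf
    rw [hcast] at hsinf
    -- hsinf : dens m A ≤ ncard / z
    have hzR : (0:ℝ) < (z:ℝ) := by exact_mod_cast h1z
    have hρz : dens m A * (z:ℝ) ≤ ((A ∩ Set.Icc 1 z).ncard : ℝ) := by
      rw [div_eq_mul_inv] at hsinf
      calc dens m A * (z:ℝ) ≤ (((A ∩ Set.Icc 1 z).ncard : ℝ) * (z:ℝ)⁻¹) * (z:ℝ) := by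
            apply mul_le_mul_of_nonneg_right _ (le_of_lt hzR)
            exact hsinf
        _ = ((A ∩ Set.Icc 1 z).ncard : ℝ) := by field_simp
    have hk1 : (1:ℝ) ≤ (k' + 1 : ℕ) * dens m A := by
      rw [ge_iff_le, div_le_iff₀ hρ] at hkρ
      exact_mod_cast hkρ
    have hR : (z : ℝ) ≤ ((k' + 1 : ℕ) : ℝ) * (cnt F z : ℝ) := by
      calc (z:ℝ) = 1 * (z:ℝ) := (one_mul _).symm
        _ ≤ (((k' + 1 : ℕ) : ℝ) * dens m A) * (z:ℝ) :=
            mul_le_mul_of_nonneg_right hk1 (le_of_lt hzR)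
        _ = ((k' + 1 : ℕ) : ℝ) * (dens m A * (z:ℝ)) := by ring
        _ ≤ ((k' + 1 : ℕ) : ℝ) * ((A ∩ Set.Icc 1 z).ncard : ℝ) := by
            apply mul_le_mul_of_nonneg_left hρz (by positivity)
        _ = ((k' + 1 : ℕ) : ℝ) * (cnt F z : ℝ) := by rw [hncard]
    exact_mod_cast hR
  -- H for the initial state
  have hH : ∀ z : ℤ, 0 ≤ z → z ≤ n →
      z ≤ (tot F (Multiset.replicate k' F) z : ℤ) := by
    intro z h0z hzn
    rcases eq_or_lt_of_le h0z with h | h1z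
    · rw [tot]; omega
    have := hcnt z h1z hzn
    have htoteq : tot F (Multiset.replicate k' F) z = (k' + 1) * cnt F z := by
      rw [tot, Multiset.map_replicate, Multiset.sum_replicate, smul_eq_mul]
      ring
    rw [htoteq]
    exact_mod_cast this
  have hmain := main n hxpos ((Multiset.replicate k' F).map Finset.card).sum F
    (Multiset.replicate k' F) le_rfl h0F h1F hFsub
    (fun S hS => by
      rw [Multiset.eq_of_mem_replicate hS]
      exact ⟨h0F, subset_rfl⟩) hH
  have hsubfin : (↑F : Set ℤ) + msum (Multiset.replicate k' F) ⊆ kFold (k' + 1) A := by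
    have : kFold (k' + 1) A = A + kFold k' A := rfl
    rw [this]
    exact Set.add_subset_add hFA (msum_replicate_subset A F hFA k')
  exact hsubfin hmain
end

section
/- Let A ⊆ {0,1,...,m} be a set of n integers and let k be a positive integer with n ≥ (m+1)/k. Then there exists u ∈ {−1, 0, ..., m+1} such that either (i) −1 ≤ u ≤ m/2 and for every integer v with u+1 ≤ v ≤ m we have |A ∩ [u+1, v]| ≥ (v−u)/(2k), or (ii) m/2 < u ≤ m+1 and for every integer v with 0 ≤ v ≤ u−1 we have |A ∩ [v, u−1]| ≥ (u−v)/(2k). -/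
/-
If neither alternative holds, failure of (i) at u gives v > u on which the potential
|A ∩ [0, u]| - (u + 1)/(2k) strictly drops; so, minimising this potential over [-1, m], it
must become negative at some t > m/2. Symmetrically |A ∩ [s, m]| < (m + 1 - s)/(2k) for some
s ≤ m/2. As s ≤ t, the two intervals cover A, whence n < (m + 1)/k.
-/

open Pointwise

theorem Finset.exists_not_and_lt_of_forall_exists_lt {ι α : Type*} [LinearOrder α]
    {s : Finset ι} (g : ι → α) (p : ι → Prop) {a : ι} (ha : a ∈ s) (hpa : p a)
    (h : ∀ u ∈ s, p u → ∃ v ∈ s, g v < g u) : ∃ t ∈ s, ¬ p t ∧ g t < g a := by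
  obtain ⟨w, hw, hmin⟩ := s.exists_min_image g ⟨a, ha⟩
  have hpw : ¬ p w := fun hpw ↦ by
    obtain ⟨v, hv, hlt⟩ := h w hw hpw
    exact (hmin v hv).not_gt hlt
  obtain ⟨v, hv, hlt⟩ := h a ha hpa
  exact ⟨w, hw, hpw, (hmin v hv).trans_lt hlt⟩

def intervalCard (A : Finset ℤ) (x y : ℤ) : ℕ :=
  (A.filter (fun a => x ≤ a ∧ a ≤ y)).card

namespace intervalCard

variable (A : Finset ℤ)

theorem eq_zero_of_lt {x y : ℤ} (h : y < x) : intervalCard A x y = 0 := by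
  simp only [intervalCard, Finset.card_eq_zero, Finset.filter_eq_empty_iff]
  omega

theorem eq_card {x y : ℤ} (hA : A ⊆ Finset.Icc x y) : intervalCard A x y = A.card := by
  rw [intervalCard, Finset.filter_true_of_mem fun a ha ↦ Finset.mem_Icc.mp (hA ha)]

theorem le_add {x y y' z : ℤ} (h : y' ≤ y + 1) :
    intervalCard A x z ≤ intervalCard A x y + intervalCard A y' z := by
  refine (Finset.card_le_card fun a ha ↦ ?_).trans (Finset.card_union_le _ _)
  simp only [Finset.mem_filter, Finset.mem_union] at ha ⊢
  obtain ⟨haA, hxa, haz⟩ := ha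
  by_cases hay : a ≤ y
  · exact .inl ⟨haA, hxa, hay⟩
  · exact .inr ⟨haA, by omega, haz⟩

end intervalCard

section Deficit

variable (A : Finset ℤ) (w c : ℝ)

theorem exists_prefix_deficit {u₀ m : ℤ} (hu₀m : u₀ ≤ m) (hu₀c : (u₀ : ℝ) ≤ c)
    (hfail : ∀ u : ℤ, u₀ ≤ u → u ≤ m → (u : ℝ) ≤ c → ∃ v : ℤ, u + 1 ≤ v ∧ v ≤ m ∧
      (intervalCard A (u + 1) v : ℝ) < ((v - u : ℤ) : ℝ) / w) :
    ∃ t : ℤ, c < t ∧ t ≤ m ∧ (intervalCard A (u₀ + 1) t : ℝ) < ((t - u₀ : ℤ) : ℝ) / w := by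
  let g : ℤ → ℝ := fun u ↦ intervalCard A (u₀ + 1) u - ((u - u₀ : ℤ) : ℝ) / w
  obtain ⟨t, ht, hct, hgt⟩ := Finset.exists_not_and_lt_of_forall_exists_lt g (· ≤ c)
    (Finset.mem_Icc.mpr ⟨le_rfl, hu₀m⟩) hu₀c fun u hu huc ↦ by
      obtain ⟨hu₀u, hum⟩ := Finset.mem_Icc.mp hu
      obtain ⟨v, huv, hvm, hlt⟩ := hfail u hu₀u hum huc
      refine ⟨v, Finset.mem_Icc.mpr ⟨by omega, hvm⟩, ?_⟩
      have hsplit : (intervalCard A (u₀ + 1) v : ℝ) ≤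
          intervalCard A (u₀ + 1) u + intervalCard A (u + 1) v := by
        exact_mod_cast intervalCard.le_add A le_rfl
      simp only [g, Int.cast_sub, sub_div] at hlt ⊢
      linarith
  simp only [g, intervalCard.eq_zero_of_lt A (lt_add_one u₀), sub_self, Int.cast_zero, zero_div,
    CharP.cast_eq_zero, sub_neg] at hgt
  exact ⟨t, not_le.mp hct, (Finset.mem_Icc.mp ht).2, hgt⟩

theorem exists_suffix_deficit {l u₀ : ℤ} (hlu₀ : l ≤ u₀) (hcu₀ : c < u₀)
    (hfail : ∀ u : ℤ, l ≤ u → u ≤ u₀ → c < u → ∃ v : ℤ, l ≤ v ∧ v ≤ u - 1 ∧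
      (intervalCard A v (u - 1) : ℝ) < ((u - v : ℤ) : ℝ) / w) :
    ∃ s : ℤ, l ≤ s ∧ s ≤ c ∧ (intervalCard A s (u₀ - 1) : ℝ) < ((u₀ - s : ℤ) : ℝ) / w := by
  let g : ℤ → ℝ := fun u ↦ intervalCard A u (u₀ - 1) - ((u₀ - u : ℤ) : ℝ) / w
  obtain ⟨s, hs, hcs, hgs⟩ := Finset.exists_not_and_lt_of_forall_exists_lt g (c < ·)
    (Finset.mem_Icc.mpr ⟨hlu₀, le_rfl⟩) hcu₀ fun u hu hcu ↦ by
      obtain ⟨hlu, huu₀⟩ := Finset.mem_Icc.mp hu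
      obtain ⟨v, hlv, hvu, hlt⟩ := hfail u hlu huu₀ hcu
      refine ⟨v, Finset.mem_Icc.mpr ⟨hlv, by omega⟩, ?_⟩
      have hsplit : (intervalCard A v (u₀ - 1) : ℝ) ≤
          intervalCard A v (u - 1) + intervalCard A u (u₀ - 1) := by
        exact_mod_cast intervalCard.le_add A (by omega)
      simp only [g, Int.cast_sub, sub_div] at hlt ⊢
      linarith
  simp only [g, intervalCard.eq_zero_of_lt A (sub_one_lt u₀), sub_self, Int.cast_zero, zero_div,
    CharP.cast_eq_zero, sub_neg] at hgs
  exact ⟨s, (Finset.mem_Icc.mp hs).1, not_lt.mp hcs, hgs⟩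

end Deficit

theorem stmt6 (m : ℕ) (A : Finset ℤ) (hA : A ⊆ Finset.Icc 0 (m : ℤ)) (n k : ℕ)
    (hn : A.card = n) (hk : 1 ≤ k) (hnk : (n : ℝ) ≥ ((m : ℝ) + 1) / k) :
    ∃ u : ℤ, -1 ≤ u ∧ u ≤ (m : ℤ) + 1 ∧
      (((u : ℝ) ≤ (m : ℝ) / 2 ∧ ∀ v : ℤ, u + 1 ≤ v → v ≤ (m : ℤ) →
          (((A.filter (fun a => u + 1 ≤ a ∧ a ≤ v)).card : ℝ)) ≥ ((v - u : ℤ) : ℝ) / (2 * k)) ∨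
       ((m : ℝ) / 2 < (u : ℝ) ∧ ∀ v : ℤ, 0 ≤ v → v ≤ u - 1 →
          (((A.filter (fun a => v ≤ a ∧ a ≤ u - 1)).card : ℝ)) ≥ ((u - v : ℤ) : ℝ) / (2 * k))) := by
  by_contra! hcon
  have hm : (0 : ℝ) ≤ m := m.cast_nonneg
  obtain ⟨t, hct, htm, ht⟩ := exists_prefix_deficit A (2 * k) ((m : ℝ) / 2) (by omega)
    (by push_cast; linarith) fun u h₁ h₂ h₃ ↦ (hcon u h₁ (by omega)).1 h₃
  obtain ⟨s, hs, hsc, hs'⟩ := exists_suffix_deficit A (2 * k) ((m : ℝ) / 2) (l := 0)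
    (by omega) (by push_cast; linarith) fun u h₁ h₂ h₃ ↦ (hcon u (by omega) h₂).2 h₃
  simp only [sub_neg_eq_add, add_sub_cancel_right] at ht hs'
  have hst : s ≤ t + 1 := by
    have : s < t := by exact_mod_cast hsc.trans_lt hct
    omega
  have hcover : (n : ℝ) ≤ intervalCard A 0 t + intervalCard A s m := by
    rw [← hn, ← intervalCard.eq_card A hA]
    exact_mod_cast intervalCard.le_add A hst
  have hk' : (0 : ℝ) < 2 * k := by positivity
  have hbound :
      ((t + 1 : ℤ) : ℝ) / (2 * k) + ((m + 1 - s : ℤ) : ℝ) / (2 * k) ≤ ((m : ℝ) + 1) / k := by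
    rw [← add_div, div_le_div_iff₀ hk' (by positivity)]
    have : (t : ℝ) ≤ m := by exact_mod_cast htm
    have : (0 : ℝ) ≤ s := by exact_mod_cast hs
    push_cast
    nlinarith
  linarith
end

section
/- Let P = {s, s+d, s+2d, ..., s+ℓd} be an arithmetic progression with common difference d and length ℓ, let d' be a proper divisor of d (1 ≤ d' < d), and let Q be a set containing integers q_0, ..., q_{d/d' − 1} such that for some integer s_q, q_i ≡ s_q + i·d' (mod d) for every i. Let h_max and h_min be integers with h_max ≥ max_i ⌊(q_i − s_q)/d⌋ and h_min ≤ min_i ⌊(q_i − s_q)/d⌋. Then the arithmetic progression {s', s'+d', ..., s'+ℓ'd'} is contained in the sumset P + Q, where s' = s + s_q + h_max·d and ℓ' = (ℓ − h_max + h_min)·(d/d'). -/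
/-!
Write `j = a * (d / d') + r` with `0 ≤ r < d / d'`. Then `q r = sq + r * d' + c * d` with
`c = ⌊(q r - sq) / d⌋ ∈ [hmin, hmax]`, so `s' + j * d' = (s + (hmax - c + a) * d) + q r`,
and `0 ≤ hmax - c + a ≤ ℓ` because `a ≤ ℓ - hmax + hmin`.
-/

open Pointwise

def arithProg (s d ℓ : ℤ) : Set ℤ := {x | ∃ i : ℤ, 0 ≤ i ∧ i ≤ ℓ ∧ x = s + i * d}

theorem eq_add_add_fdiv_mul_of_modEq {d r x y : ℤ} (hd : 0 < d) (hr0 : 0 ≤ r) (hrd : r < d)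
    (h : x ≡ y + r [ZMOD d]) : x = y + r + Int.fdiv (x - y) d * d := by
  have hrem : (x - y) % d = r := by
    simpa [Int.ModEq, Int.emod_eq_of_lt hr0 hrd] using h.sub_right y
  rw [Int.fdiv_eq_ediv_of_nonneg _ hd.le]
  linarith [Int.ediv_mul_add_emod (x - y) d]

theorem add_mem_arithProg_add {s d ℓ sq hmax hmin a r c q : ℤ} {Q : Set ℤ} (hq : q ∈ Q)
    (hqc : q = sq + r + c * d) (hc_min : hmin ≤ c) (hc_max : c ≤ hmax) (ha0 : 0 ≤ a)
    (haℓ : a ≤ ℓ - hmax + hmin) :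
    s + sq + hmax * d + (a * d + r) ∈ arithProg s d ℓ + Q := by
  have hP : s + (hmax - c + a) * d ∈ arithProg s d ℓ := ⟨hmax - c + a, by omega, by omega, rfl⟩
  convert Set.add_mem_add hP hq using 1
  rw [hqc]
  ring

theorem stmt7_general (s d d' sq hmax hmin : ℤ) (ℓ : ℤ)
    (hd'1 : 1 ≤ d') (hd'd : d' < d) (hdvd : d' ∣ d)
    (Q : Set ℤ) (q : ℤ → ℤ)
    (hq : ∀ i : ℤ, 0 ≤ i → i ≤ d / d' - 1 → q i ∈ Q ∧ q i ≡ sq + i * d' [ZMOD d])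
    (hmax' : ∀ i : ℤ, 0 ≤ i → i ≤ d / d' - 1 → Int.fdiv (q i - sq) d ≤ hmax)
    (hmin' : ∀ i : ℤ, 0 ≤ i → i ≤ d / d' - 1 → hmin ≤ Int.fdiv (q i - sq) d) :
    ∀ j : ℤ, 0 ≤ j → j ≤ (ℓ - hmax + hmin) * (d / d') →
      s + sq + hmax * d + j * d' ∈ {x : ℤ | ∃ i : ℤ, 0 ≤ i ∧ i ≤ ℓ ∧ x = s + i * d} + Q := by
  intro j hj0 hjℓ
  set m := d / d'
  have hd : 0 < d := by omega
  have hdm : d = d' * m := (Int.mul_ediv_cancel' hdvd).symm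
  have hm : 0 < m := pos_of_mul_pos_right (hdm ▸ hd) (by omega)
  have hj : j = j / m * m + j % m := (Int.ediv_mul_add_emod j m).symm
  have hr0 : 0 ≤ j % m := Int.emod_nonneg j hm.ne'
  have hrm : j % m < m := Int.emod_lt_of_pos j hm
  have ha0 : 0 ≤ j / m := Int.ediv_nonneg hj0 hm.le
  have haℓ : j / m ≤ ℓ - hmax + hmin := Int.ediv_le_of_le_mul hm hjℓ
  obtain ⟨hqQ, hqmod⟩ := hq (j % m) hr0 (by omega)
  have hqc := eq_add_add_fdiv_mul_of_modEq hd (by positivity) (by nlinarith) hqmod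
  have hsum : j * d' = j / m * d + j % m * d' := by linear_combination d' * hj - j / m * hdm
  rw [hsum]
  exact add_mem_arithProg_add hqQ hqc (hmin' _ hr0 (by omega)) (hmax' _ hr0 (by omega)) ha0 haℓ

theorem stmt7 (s d d' sq hmax hmin : ℤ) (ℓ : ℤ) (hℓ : 0 ≤ ℓ)
    (hd'1 : 1 ≤ d') (hd'd : d' < d) (hdvd : d' ∣ d)
    (Q : Set ℤ) (q : ℤ → ℤ)
    (hq : ∀ i : ℤ, 0 ≤ i → i ≤ d / d' - 1 → q i ∈ Q ∧ q i ≡ sq + i * d' [ZMOD d])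
    (hmax' : ∀ i : ℤ, 0 ≤ i → i ≤ d / d' - 1 → Int.fdiv (q i - sq) d ≤ hmax)
    (hmin' : ∀ i : ℤ, 0 ≤ i → i ≤ d / d' - 1 → hmin ≤ Int.fdiv (q i - sq) d)
    (hlen : 0 ≤ ℓ - hmax + hmin) :
    ∀ j : ℤ, 0 ≤ j → j ≤ (ℓ - hmax + hmin) * (d / d') →
      s + sq + hmax * d + j * d' ∈ {x : ℤ | ∃ i : ℤ, 0 ≤ i ∧ i ≤ ℓ ∧ x = s + i * d} + Q :=
  stmt7_general s d d' sq hmax hmin ℓ hd'1 hd'd hdvd Q q hq hmax' hmin'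
end

section
/- Let P = {s, s+d, ..., s+ℓd} be an arithmetic progression and let A = {a, a+g} with d | g and 1 ≤ g ≤ ℓd. Then for every positive integer h, the arithmetic progression {s+ha, s+ha+d, ..., s+ha+(ℓ + hg/d)d} is contained in P + hA. -/
/-! With `q = g / d`, the translates `[m q, m q + ℓ]` for `0 ≤ m ≤ h` cover `[0, ℓ + h q]` because
`q ≤ ℓ`, so every `j` there is `i + m q` with `0 ≤ i ≤ ℓ`. Then
`s + h a + j d = (s + i d) + ((h - m) a + m (a + g))`. -/

open Pointwise

lemma mul_add_mul_mem_kFold_pair (a g : ℤ) {n m : ℕ} (hm : m ≤ n) :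
    (n : ℤ) * a + m * g ∈ kFold n ({a, a + g} : Set ℤ) := by
  induction n generalizing m with
  | zero => simp_all [kFold]
  | succ n ih =>
    rcases m with _ | m
    · exact Set.mem_add.mpr ⟨a, by simp, n * a + (0 : ℕ) * g, ih n.zero_le, by push_cast; ring⟩
    · exact Set.mem_add.mpr ⟨a + g, by simp, n * a + m * g, ih (by omega), by push_cast; ring⟩

lemma exists_sub_mul_mem_Icc (q ℓ : ℤ) (hq : q ≤ ℓ + 1) :
    ∀ (n : ℕ) (j : ℤ), 0 ≤ j → j ≤ ℓ + n * q → ∃ m : ℕ, m ≤ n ∧ j - m * q ∈ Set.Icc 0 ℓ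
  | 0, j, hj0, hj => ⟨0, le_rfl, by simp_all⟩
  | n + 1, j, hj0, hj => by
    by_cases hjℓ : j ≤ ℓ
    · exact ⟨0, (n + 1).zero_le, by simpa using ⟨hj0, hjℓ⟩⟩
    obtain ⟨m, hmn, hm⟩ := exists_sub_mul_mem_Icc q ℓ hq n (j - q) (by omega)
      (by push_cast at hj; linarith)
    exact ⟨m + 1, by omega, by push_cast; convert hm using 1; ring⟩

theorem stmt9_general (s d a g : ℤ) (ℓ : ℤ) (hℓ : 0 ≤ ℓ) (hdvd : d ∣ g) (hg1 : 1 ≤ g)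
    (hg2 : g ≤ ℓ * d) (h : ℕ) :
    ∀ j : ℤ, 0 ≤ j → j ≤ ℓ + (h : ℤ) * (g / d) →
      s + (h : ℤ) * a + j * d ∈
        {x : ℤ | ∃ i : ℤ, 0 ≤ i ∧ i ≤ ℓ ∧ x = s + i * d} + kFold h ({a, a + g} : Set ℤ) := by
  intro j hj0 hj
  obtain ⟨q, rfl⟩ := hdvd
  have hd : 0 < d := by
    by_contra! hd
    nlinarith
  have hqℓ : q ≤ ℓ := le_of_mul_le_mul_left (by linarith) hd
  rw [Int.mul_ediv_cancel_left q hd.ne'] at hj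
  obtain ⟨m, hmh, hi0, hiℓ⟩ := exists_sub_mul_mem_Icc q ℓ (by omega) h j hj0 hj
  exact Set.mem_add.mpr ⟨s + (j - m * q) * d, ⟨j - m * q, hi0, hiℓ, rfl⟩,
    h * a + m * (d * q), mul_add_mul_mem_kFold_pair a (d * q) hmh, by ring⟩

theorem stmt9 (s d a g : ℤ) (ℓ : ℤ) (hℓ : 0 ≤ ℓ) (hdvd : d ∣ g) (hg1 : 1 ≤ g)
    (hg2 : g ≤ ℓ * d) (h : ℕ) (hh : 1 ≤ h) :
    ∀ j : ℤ, 0 ≤ j → j ≤ ℓ + (h : ℤ) * (g / d) →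
      s + (h : ℤ) * a + j * d ∈
        {x : ℤ | ∃ i : ℤ, 0 ≤ i ∧ i ≤ ℓ ∧ x = s + i * d} + kFold h ({a, a + g} : Set ℤ) :=
  stmt9_general s d a g ℓ hℓ hdvd hg1 hg2 h
end

section
/- Let T be a finite set of integer pairs that is conflict-free (no two pairs share a common integer) and suppose the multiset of gaps G_T = { z' − z : (z, z') ∈ T } is u-uniform (every gap value occurs as the gap of exactly u pairs of T). Let A_T be the set of all integers appearing in pairs of T and let s_T be the sum of the first coordinates of all pairs in T. Then for every z in the u-fold sumset u·(G_T ∪ {0}), we have s_T + z ∈ 𝒮(A_T), the set of subset sums of A_T. -/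
open Pointwise

/-- A set of integer pairs is conflict-free if all the integers appearing in its pairs
are pairwise distinct. -/
def ConflictFree (T : Finset (ℤ × ℤ)) : Prop :=
  (∀ p ∈ T, p.1 ≠ p.2) ∧
    ∀ p ∈ T, ∀ q ∈ T, p ≠ q → p.1 ≠ q.1 ∧ p.1 ≠ q.2 ∧ p.2 ≠ q.1 ∧ p.2 ≠ q.2

/-- The set of integers appearing in pairs of T. -/
def pairSet (T : Finset (ℤ × ℤ)) : Finset ℤ := T.image Prod.fst ∪ T.image Prod.snd

theorem stmt11 (T : Finset (ℤ × ℤ)) (u : ℕ) (hcf : ConflictFree T)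
    (huni : ∀ g : ℤ, (∃ p ∈ T, p.2 - p.1 = g) →
      (T.filter (fun p => p.2 - p.1 = g)).card = u)
    (z : ℤ)
    (hz : z ∈ kFold u ((↑(T.image (fun p => p.2 - p.1)) : Set ℤ) ∪ {0})) :
    ∃ B ⊆ pairSet T, (∑ p ∈ T, p.1) + z = ∑ b ∈ B, b := by
  have key : ∀ k : ℕ, k ≤ u → ∀ w : ℤ,
      w ∈ kFold k ((↑(T.image (fun p => p.2 - p.1)) : Set ℤ) ∪ {0}) →
      ∃ S : Finset (ℤ × ℤ), S ⊆ T ∧ w = ∑ p ∈ S, (p.2 - p.1) ∧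
        ∀ g, (S.filter (fun p => p.2 - p.1 = g)).card ≤ k := by
    intro k
    induction k with
    | zero =>
      intro _ w hw
      refine ⟨∅, Finset.empty_subset _, ?_, by simp⟩
      simpa [kFold] using hw
    | succ k ih =>
      intro hk w hw
      rw [kFold] at hw
      obtain ⟨a, ha, w', hw', rfl⟩ := Set.mem_add.mp hw
      obtain ⟨S', hS'T, hsum, hcard⟩ := ih (Nat.le_of_succ_le hk) w' hw'
      rcases ha with ha | ha
      · simp only [Finset.coe_image, Set.mem_image, Finset.mem_coe] at ha
        obtain ⟨p₀, hp₀, hgap⟩ := ha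
        have hTu : (T.filter (fun p => p.2 - p.1 = a)).card = u :=
          huni a ⟨p₀, hp₀, hgap⟩
        have hlt : (S'.filter (fun p => p.2 - p.1 = a)).card <
            (T.filter (fun p => p.2 - p.1 = a)).card := by
          calc (S'.filter (fun p => p.2 - p.1 = a)).card ≤ k := hcard a
            _ < u := hk
            _ = _ := hTu.symm
        obtain ⟨q, hqT, hqS⟩ : ∃ q ∈ T.filter (fun p => p.2 - p.1 = a),
            q ∉ S'.filter (fun p => p.2 - p.1 = a) := by
          by_contra h
          push_neg at h
          exact absurd (Finset.card_le_card fun q hq => h q hq) (not_le.mpr hlt)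
        rw [Finset.mem_filter] at hqT
        have hqS' : q ∉ S' := fun h => hqS (Finset.mem_filter.mpr ⟨h, hqT.2⟩)
        refine ⟨insert q S', ?_, ?_, ?_⟩
        · exact Finset.insert_subset hqT.1 hS'T
        · rw [Finset.sum_insert hqS', hqT.2, hsum]
        · intro g
          rw [Finset.filter_insert]
          by_cases hg : q.2 - q.1 = g
          · simp only [hg, if_true]
            calc (insert q (S'.filter (fun p => p.2 - p.1 = g))).card
                ≤ (S'.filter (fun p => p.2 - p.1 = g)).card + 1 :=
                  Finset.card_insert_le _ _
              _ ≤ k + 1 := by have := hcard g; omega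
          · simp only [hg, if_false]
            exact (hcard g).trans (Nat.le_succ k)
      · simp only [Set.mem_singleton_iff] at ha
        subst ha
        exact ⟨S', hS'T, by simpa using hsum, fun g => (hcard g).trans (Nat.le_succ k)⟩
  obtain ⟨S, hST, hzS, -⟩ := key u le_rfl z hz
  classical
  refine ⟨(T \ S).image Prod.fst ∪ S.image Prod.snd, ?_, ?_⟩
  · apply Finset.union_subset
    · exact (Finset.image_subset_image (Finset.sdiff_subset)).trans
        (Finset.subset_union_left)
    · exact (Finset.image_subset_image hST).trans (Finset.subset_union_right)
  · have hdisj : Disjoint ((T \ S).image Prod.fst) (S.image Prod.snd) := by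
      rw [Finset.disjoint_left]
      rintro x hx hy
      obtain ⟨p, hp, rfl⟩ := Finset.mem_image.mp hx
      obtain ⟨q, hq, hqx⟩ := Finset.mem_image.mp hy
      have hpT : p ∈ T := Finset.mem_sdiff.mp hp |>.1
      have hqT : q ∈ T := hST hq
      by_cases hpq : p = q
      · subst hpq; exact hcf.1 p hpT hqx.symm
      · exact (hcf.2 p hpT q hqT hpq).2.1 hqx.symm
    have hinj1 : Set.InjOn Prod.fst ((T \ S : Finset (ℤ × ℤ)) : Set (ℤ × ℤ)) := by
      intro p hp q hq hpq
      by_contra hne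
      exact (hcf.2 p (Finset.mem_sdiff.mp hp |>.1) q (Finset.mem_sdiff.mp hq |>.1) hne).1 hpq
    have hinj2 : Set.InjOn Prod.snd (S : Set (ℤ × ℤ)) := by
      intro p hp q hq hpq
      by_contra hne
      exact (hcf.2 p (hST hp) q (hST hq) hne).2.2.2 hpq
    rw [Finset.sum_union hdisj, Finset.sum_image (fun p hp q hq => hinj1 (by simpa using hp) (by simpa using hq)),
      Finset.sum_image (fun p hp q hq => hinj2 (by simpa using hp) (by simpa using hq))]
    have hsplit : ∑ p ∈ T \ S, p.1 + ∑ p ∈ S, p.1 = ∑ p ∈ T, p.1 :=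
      Finset.sum_sdiff hST
    rw [hzS]
    have : ∑ p ∈ S, (p.2 - p.1) = ∑ p ∈ S, p.2 - ∑ p ∈ S, p.1 := Finset.sum_sub_distrib _ _
    rw [this]; omega
end

section
/- Let T be a finite set of n ≥ 1 integer pairs. Then there exists an integer u ≥ 1 and a subset T' ⊆ T with |T'| ≥ n / log₂(2n) such that every gap value of T' occurs as the gap of exactly u pairs in T' (i.e., G_{T'} is u-uniform). -/
open Pointwise

theorem stmt12 (T : Finset (ℤ × ℤ)) (n : ℕ) (hn : T.card = n) (h1 : 1 ≤ n) :
    ∃ u : ℕ, 1 ≤ u ∧ ∃ T' ⊆ T, ((T'.card : ℝ) ≥ (n : ℝ) / Real.logb 2 (2 * n)) ∧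
      ∀ g : ℤ, (∃ p ∈ T', p.2 - p.1 = g) →
        (T'.filter (fun p => p.2 - p.1 = g)).card = u := by
  classical
  set m : ℤ → ℕ := fun g => (T.filter (fun p => p.2 - p.1 = g)).card with hm
  set L : ℕ := Nat.log 2 n + 1 with hL
  set G : Finset ℤ := T.image (fun p => p.2 - p.1) with hG
  have hsum : ∑ g ∈ G, m g = n := by
    rw [← hn, hG]; exact (Finset.card_eq_sum_card_image _ _).symm
  -- geometric sum fact
  have geom : ∀ k : ℕ, 2 ^ k ≤ ∑ j ∈ Finset.range k, 2 ^ j + 1 := by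
    intro k
    induction k with
    | zero => simp
    | succ k ih =>
      rw [Finset.sum_range_succ, pow_succ]
      omega
  -- key inequality
  have key : n ≤ ∑ j ∈ Finset.range L, 2 ^ j * (G.filter (fun g => 2 ^ j ≤ m g)).card := by
    have h2 : ∀ g ∈ G, m g ≤ ∑ j ∈ Finset.range L, (if 2 ^ j ≤ m g then 2 ^ j else 0) := by
      intro g hg
      have hmg : m g ≠ 0 := by
        rw [hG] at hg
        obtain ⟨p, hp, hpg⟩ := Finset.mem_image.mp hg
        have : p ∈ T.filter (fun p => p.2 - p.1 = g) := Finset.mem_filter.mpr ⟨hp, hpg⟩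
        exact Finset.card_ne_zero_of_mem this
      have hmn : m g ≤ n := by
        rw [← hn]; exact Finset.card_filter_le _ _
      set k := Nat.log 2 (m g) with hk
      have hkL : k + 1 ≤ L := by
        have := Nat.log_mono_right (b := 2) hmn
        omega
      have hfilt : (Finset.range L).filter (fun j => 2 ^ j ≤ m g) = Finset.range (k + 1) := by
        ext j
        simp only [Finset.mem_filter, Finset.mem_range]
        constructor
        · rintro ⟨_, h⟩
          have := (Nat.le_log_iff_pow_le one_lt_two hmg).mpr h
          omega
        · intro hj
          have : 2 ^ j ≤ m g := (Nat.le_log_iff_pow_le one_lt_two hmg).mp (by omega)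
          exact ⟨by omega, this⟩
      rw [← Finset.sum_filter, hfilt]
      have h3 := geom (k + 1)
      have h4 : m g < 2 ^ (k + 1) := Nat.lt_pow_succ_log_self one_lt_two _
      omega
    calc n = ∑ g ∈ G, m g := hsum.symm
    _ ≤ ∑ g ∈ G, ∑ j ∈ Finset.range L, (if 2 ^ j ≤ m g then 2 ^ j else 0) :=
        Finset.sum_le_sum h2
    _ = ∑ j ∈ Finset.range L, ∑ g ∈ G, (if 2 ^ j ≤ m g then 2 ^ j else 0) :=
        Finset.sum_comm
    _ = ∑ j ∈ Finset.range L, 2 ^ j * (G.filter (fun g => 2 ^ j ≤ m g)).card := by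
        refine Finset.sum_congr rfl fun j _ => ?_
        rw [← Finset.sum_filter, Finset.sum_const, smul_eq_mul, mul_comm]
  -- pigeonhole over real numbers
  have hLpos : (0 : ℝ) < L := by positivity
  obtain ⟨j, hjL, hj⟩ : ∃ j ∈ Finset.range L, (n : ℝ) / L ≤
      (2 ^ j * (G.filter (fun g => 2 ^ j ≤ m g)).card : ℕ) := by
    apply Finset.exists_le_of_sum_le (by simp [hL])
    rw [Finset.sum_const, Finset.card_range, nsmul_eq_mul]
    rw [mul_div_cancel₀ _ (ne_of_gt hLpos)]
    exact_mod_cast key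
  set u : ℕ := 2 ^ j with hu
  set G' : Finset ℤ := G.filter (fun g => u ≤ m g) with hG'
  -- choose subsets
  have hchoose : ∀ g ∈ G', ∃ F ⊆ T.filter (fun p => p.2 - p.1 = g), F.card = u := by
    intro g hg
    exact Finset.exists_subset_card_eq (Finset.mem_filter.mp hg).2
  set F : ℤ → Finset (ℤ × ℤ) := fun g =>
    if h : g ∈ G' then (hchoose g h).choose else ∅ with hF
  have hFsub : ∀ g ∈ G', F g ⊆ T.filter (fun p => p.2 - p.1 = g) := by
    intro g hg; rw [hF]; simp only [dif_pos hg]; exact (hchoose g hg).choose_spec.1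
  have hFcard : ∀ g ∈ G', (F g).card = u := by
    intro g hg; rw [hF]; simp only [dif_pos hg]; exact (hchoose g hg).choose_spec.2
  set T' : Finset (ℤ × ℤ) := G'.biUnion F with hT'
  have hsubT : T' ⊆ T := by
    intro p hp
    obtain ⟨g, hg, hpg⟩ := Finset.mem_biUnion.mp hp
    exact Finset.mem_of_mem_filter p (hFsub g hg hpg)
  have hgap : ∀ g ∈ G', ∀ p ∈ F g, p.2 - p.1 = g := by
    intro g hg p hp
    exact (Finset.mem_filter.mp (hFsub g hg hp)).2
  have hdisj : ∀ x ∈ G', ∀ y ∈ G', x ≠ y → Disjoint (F x) (F y) := by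
    intro x hx y hy hxy
    rw [Finset.disjoint_left]
    intro p hpx hpy
    exact hxy ((hgap x hx p hpx).symm.trans (hgap y hy p hpy))
  have hcard : T'.card = u * G'.card := by
    rw [hT', Finset.card_biUnion hdisj]
    rw [Finset.sum_congr rfl hFcard, Finset.sum_const, smul_eq_mul, mul_comm]
  refine ⟨u, Nat.one_le_two_pow, T', hsubT, ?_, ?_⟩
  · -- size bound
    have hlogb : (L : ℝ) ≤ Real.logb 2 (2 * n) := by
      have h2n : Real.logb 2 (2 * n) = 1 + Real.logb 2 n := by
        rw [Real.logb_mul (by norm_num) (by positivity), Real.logb_self_eq_one (by norm_num)]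
      have hlog : (Nat.log 2 n : ℝ) ≤ Real.logb 2 n := by
        have hpow : (2 : ℝ) ^ (Nat.log 2 n) ≤ n := by
          exact_mod_cast Nat.pow_log_le_self 2 (by omega)
        calc (Nat.log 2 n : ℝ) = Real.logb 2 ((2:ℝ) ^ (Nat.log 2 n)) := by
              rw [Real.logb_pow, Real.logb_self_eq_one (by norm_num), mul_one]
        _ ≤ Real.logb 2 n := Real.logb_le_logb_of_le (by norm_num) (by positivity) hpow
      rw [h2n, hL]
      push_cast
      linarith
    have hlogpos : (0 : ℝ) < Real.logb 2 (2 * n) := lt_of_lt_of_le hLpos hlogb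
    have := div_le_div_of_nonneg_left (by positivity : (0:ℝ) ≤ n) hLpos hlogb
    have h2 : ((2 ^ j * (G.filter (fun g => 2 ^ j ≤ m g)).card : ℕ) : ℝ) = (T'.card : ℝ) := by
      rw [hcard]
    rw [ge_iff_le]
    exact le_trans this (le_of_le_of_eq hj h2)
  · -- uniformity
    rintro g ⟨p, hp, hpg⟩
    obtain ⟨g₀, hg₀, hpg₀⟩ := Finset.mem_biUnion.mp hp
    have hgg : g₀ = g := by rw [← hpg, hgap g₀ hg₀ p hpg₀]
    subst hgg
    have heq : T'.filter (fun q => q.2 - q.1 = g₀) = F g₀ := by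
      ext q
      simp only [Finset.mem_filter, hT', Finset.mem_biUnion]
      constructor
      · rintro ⟨⟨g₁, hg₁, hq⟩, hqg⟩
        have h5 : g₁ = g₀ := by rw [← hqg, hgap g₁ hg₁ q hq]
        rwa [h5] at hq
      · intro hq
        exact ⟨⟨g₀, hg₀, hq⟩, hgap g₀ hg₀ q hq⟩
    rw [heq, hFcard g₀ hg₀]
end

section
/- Let A ⊆ {1,...,m} be a sorted set of 4n integers (n ≥ 1). Then there exists a conflict-free set T ⊆ A × A of at least n pairs such that every pair (z, z') ∈ T satisfies 1 ≤ z' − z ≤ m/n. -/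
open Pointwise

theorem stmt13 (m n : ℕ) (hn : 1 ≤ n) (A : Finset ℤ) (hA : A ⊆ Finset.Icc 1 (m : ℤ))
    (hcard : A.card = 4 * n) :
    ∃ T : Finset (ℤ × ℤ), T ⊆ A ×ˢ A ∧ ConflictFree T ∧ n ≤ T.card ∧
      ∀ p ∈ T, 1 ≤ p.2 - p.1 ∧ ((p.2 - p.1 : ℤ) : ℝ) ≤ (m : ℝ) / n := by
  classical
  have hcard' : A.card = 4 * n := hcard
  set f := A.orderEmbOfFin hcard with hf
  set F : ℕ → ℤ := fun i => if h : i < 4 * n then f ⟨i, h⟩ else 0 with hF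
  have Fmem : ∀ i, i < 4 * n → F i ∈ A := by
    intro i hi
    simp only [hF, dif_pos hi]
    exact Finset.orderEmbOfFin_mem A hcard ⟨i, hi⟩
  have Fmono : ∀ i j, i < j → j < 4 * n → F i < F j := by
    intro i j hij hj
    have hi : i < 4 * n := lt_trans hij hj
    simp only [hF, dif_pos hi, dif_pos hj]
    exact f.strictMono (by exact_mod_cast hij)
  have Finj : ∀ i j, i < 4 * n → j < 4 * n → F i = F j → i = j := by
    intro i j hi hj hij
    rcases lt_trichotomy i j with h | h | h
    · exact absurd hij (Fmono i j h hj).ne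
    · exact h
    · exact absurd hij.symm (Fmono j i h hi).ne
  have Fbd : ∀ i, i < 4 * n → 1 ≤ F i ∧ F i ≤ (m : ℤ) := by
    intro i hi
    have := hA (Fmem i hi)
    simpa using Finset.mem_Icc.mp this
  have hn4 : 4 ≤ 4 * n := by omega
  -- gap function
  set g : ℕ → ℤ := fun i => F (2 * i + 1) - F (2 * i) with hg
  have gpos : ∀ i, i < 2 * n → 1 ≤ g i := by
    intro i hi
    have := Fmono (2 * i) (2 * i + 1) (by omega) (by omega)
    show (1:ℤ) ≤ F (2 * i + 1) - F (2 * i)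
    omega
  -- telescoping sum bound
  have telesum : ∑ j ∈ Finset.range (4 * n - 1), (F (j + 1) - F j) = F (4 * n - 1) - F 0 := by
    have := Finset.sum_range_sub F (4 * n - 1)
    simpa using this
  have hsub : (Finset.range (2 * n)).image (fun i => 2 * i) ⊆ Finset.range (4 * n - 1) := by
    intro j hj
    simp only [Finset.mem_image, Finset.mem_range] at hj ⊢
    omega
  have himg : ∑ i ∈ Finset.range (2 * n), g i
      = ∑ j ∈ (Finset.range (2 * n)).image (fun i => 2 * i), (F (j + 1) - F j) := by
    rw [Finset.sum_image (by intro a _ b _ h; simp only at h; omega)]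
  have sumle : ∑ i ∈ Finset.range (2 * n), g i ≤ (m : ℤ) - 1 := by
    have h1 : ∑ j ∈ (Finset.range (2 * n)).image (fun i => 2 * i), (F (j + 1) - F j)
        ≤ ∑ j ∈ Finset.range (4 * n - 1), (F (j + 1) - F j) := by
      apply Finset.sum_le_sum_of_subset_of_nonneg hsub
      intro j hj _
      have hj' : j < 4 * n - 1 := Finset.mem_range.mp hj
      have := Fmono j (j + 1) (by omega) (by omega)
      omega
    have h2 := (Fbd (4 * n - 1) (by omega)).2
    have h3 := (Fbd 0 (by omega)).1
    rw [himg]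
    omega
  -- the good set
  set S : Finset ℕ := (Finset.range (2 * n)).filter (fun i => (n : ℤ) * g i ≤ (m : ℤ)) with hS
  have hSsub : S ⊆ Finset.range (2 * n) := Finset.filter_subset _ _
  have hScard : n ≤ S.card := by
    by_contra hc
    push_neg at hc
    set C : Finset ℕ := (Finset.range (2 * n)) \ S with hC
    have hCcard : n + 1 ≤ C.card := by
      have := Finset.card_sdiff_add_card_eq_card hSsub
      rw [← hC] at this
      have hr : (Finset.range (2 * n)).card = 2 * n := Finset.card_range _
      omega
    have hCsum : (↑(n + 1) * ((m : ℤ) + 1)) ≤ ∑ i ∈ C, (n : ℤ) * g i := by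
      calc (↑(n + 1) * ((m : ℤ) + 1)) ≤ (C.card : ℤ) * ((m : ℤ) + 1) := by
            have : ((n : ℤ) + 1) ≤ (C.card : ℤ) := by exact_mod_cast hCcard
            have hm : (0 : ℤ) ≤ (m : ℤ) + 1 := by positivity
            push_cast
            nlinarith
        _ = ∑ _i ∈ C, ((m : ℤ) + 1) := by rw [Finset.sum_const, nsmul_eq_mul]
        _ ≤ ∑ i ∈ C, (n : ℤ) * g i := by
            apply Finset.sum_le_sum
            intro i hi
            have hi1 : i ∈ Finset.range (2 * n) := (Finset.mem_sdiff.mp hi).1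
            have hi2 : ¬ ((n : ℤ) * g i ≤ (m : ℤ)) := by
              have := (Finset.mem_sdiff.mp hi).2
              simp only [hS, Finset.mem_filter, not_and] at this
              exact this hi1
            omega
    have hSsum : (0 : ℤ) ≤ ∑ i ∈ S, (n : ℤ) * g i := by
      apply Finset.sum_nonneg
      intro i hi
      have hi1 : i < 2 * n := Finset.mem_range.mp (Finset.mem_filter.mp hi).1
      have := gpos i hi1
      positivity
    have htot : ∑ i ∈ Finset.range (2 * n), (n : ℤ) * g i
        = ∑ i ∈ C, (n : ℤ) * g i + ∑ i ∈ S, (n : ℤ) * g i := by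
      rw [hC, Finset.sum_sdiff hSsub]
    have hmul : ∑ i ∈ Finset.range (2 * n), (n : ℤ) * g i ≤ (n : ℤ) * ((m : ℤ) - 1) := by
      rw [← Finset.mul_sum]
      have hn0 : (0 : ℤ) ≤ (n : ℤ) := by positivity
      exact mul_le_mul_of_nonneg_left sumle hn0
    have hn1 : (1 : ℤ) ≤ (n : ℤ) := by exact_mod_cast hn
    have hm0 : (0 : ℤ) ≤ (m : ℤ) := by positivity
    push_cast at hCsum
    nlinarith
  -- build T
  set T : Finset (ℤ × ℤ) := S.image (fun i => (F (2 * i), F (2 * i + 1))) with hT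
  have hmemS : ∀ i ∈ S, i < 2 * n := fun i hi =>
    Finset.mem_range.mp (Finset.mem_filter.mp hi).1
  refine ⟨T, ?_, ?_, ?_, ?_⟩
  · intro p hp
    simp only [hT, Finset.mem_image] at hp
    obtain ⟨i, hi, rfl⟩ := hp
    have hi' := hmemS i hi
    exact Finset.mem_product.mpr ⟨Fmem _ (by omega), Fmem _ (by omega)⟩
  · constructor
    · intro p hp
      simp only [hT, Finset.mem_image] at hp
      obtain ⟨i, hi, rfl⟩ := hp
      have hi' := hmemS i hi
      exact (Fmono (2 * i) (2 * i + 1) (by omega) (by omega)).ne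
    · intro p hp q hq hpq
      simp only [hT, Finset.mem_image] at hp hq
      obtain ⟨i, hi, rfl⟩ := hp
      obtain ⟨j, hj, rfl⟩ := hq
      have hi' := hmemS i hi
      have hj' := hmemS j hj
      have hij : i ≠ j := by rintro rfl; exact hpq rfl
      refine ⟨?_, ?_, ?_, ?_⟩ <;>
        · intro h
          have := Finj _ _ (by omega) (by omega) h
          omega
  · calc n ≤ S.card := hScard
      _ = T.card := by
        rw [hT]
        rw [Finset.card_image_of_injOn]
        intro a ha b hb h
        have ha' := hmemS a ha
        have hb' := hmemS b hb
        have := Finj (2 * a) (2 * b) (by omega) (by omega) (congrArg Prod.fst h)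
        omega
  · intro p hp
    simp only [hT, Finset.mem_image] at hp
    obtain ⟨i, hi, rfl⟩ := hp
    have hi' := hmemS i hi
    have h1 : 1 ≤ g i := gpos i hi'
    have h2 : (n : ℤ) * g i ≤ (m : ℤ) := (Finset.mem_filter.mp hi).2
    constructor
    · exact h1
    · have hn0 : (0 : ℝ) < (n : ℝ) := by exact_mod_cast hn
      rw [le_div_iff₀ hn0]
      have : ((n : ℤ) * g i : ℤ) ≤ (m : ℤ) := h2
      calc ((F (2 * i + 1) - F (2 * i) : ℤ) : ℝ) * (n : ℝ)
          = (((n : ℤ) * g i : ℤ) : ℝ) := by push_cast [hg]; ring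
        _ ≤ (m : ℝ) := by exact_mod_cast this
end

section
/- Let A ⊆ {1,...,m} be a set of n ≥ 4 integers, d a positive integer, and ℓ an integer with ℓ ≥ 16000m/n. Then there exists a pair (a, a') ∈ A × A with a < a' satisfying one of: (i) d ∤ (a' − a) and 1 ≤ a' − a ≤ ℓ/4000, or (ii) d | (a' − a) and ℓd/(8000γ) ≤ a' − a ≤ ℓd/4000, where γ = m/n + ℓ/(4000n). -/
open Pointwise

set_option maxHeartbeats 1000000 in

theorem stmt14 (m n : ℕ) (hn : 4 ≤ n) (A : Finset ℤ) (hA : A ⊆ Finset.Icc 1 (m : ℤ))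
    (hcard : A.card = n) (d : ℤ) (hd : 1 ≤ d) (ℓ : ℤ)
    (hℓ : (ℓ : ℝ) ≥ 16000 * m / n) :
    ∃ a ∈ A, ∃ a' ∈ A, a < a' ∧
      ((¬ d ∣ (a' - a) ∧ 1 ≤ a' - a ∧ ((a' - a : ℤ) : ℝ) ≤ (ℓ : ℝ) / 4000) ∨
       (d ∣ (a' - a) ∧
        (ℓ : ℝ) * (d : ℝ) / (8000 * ((m : ℝ) / n + (ℓ : ℝ) / (4000 * n))) ≤ ((a' - a : ℤ) : ℝ) ∧
        ((a' - a : ℤ) : ℝ) ≤ (ℓ : ℝ) * (d : ℝ) / 4000)) := by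
  by_contra hcon
  push_neg at hcon
  -- basic facts
  have hmn : n ≤ m := by
    have h1 := Finset.card_le_card hA
    rw [hcard, Int.card_Icc] at h1
    have h2 : ((m:ℤ) + 1 - 1).toNat = m := by simp
    omega
  have hN4 : (4:ℝ) ≤ (n:ℝ) := by exact_mod_cast hn
  have hNpos : (0:ℝ) < (n:ℝ) := by linarith
  have hMN : (n:ℝ) ≤ (m:ℝ) := by exact_mod_cast hmn
  have hM1 : (1:ℝ) ≤ (m:ℝ) := by linarith
  have hD1 : (1:ℝ) ≤ (d:ℝ) := by exact_mod_cast hd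
  have hDpos : (0:ℝ) < (d:ℝ) := by linarith
  set L : ℝ := (ℓ:ℝ)/4000 with hLdef
  have hL4 : 4*(m:ℝ)/(n:ℝ) ≤ L := by
    rw [hLdef]
    rw [ge_iff_le, div_le_iff₀ hNpos] at hℓ
    rw [div_le_div_iff₀ hNpos (by norm_num : (0:ℝ) < 4000)]
    linarith
  have hL4' : (4:ℝ) ≤ L := by
    have h1 : (4:ℝ) ≤ 4*(m:ℝ)/(n:ℝ) := by
      rw [le_div_iff₀ hNpos]; nlinarith
    linarith
  have hLpos : (0:ℝ) < L := by linarith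
  set c : ℝ := L*(d:ℝ)*(n:ℝ)/(2*((m:ℝ)+L)) with hcdef
  have hMLpos : (0:ℝ) < (m:ℝ) + L := by linarith
  have hcpos : (0:ℝ) < c := by
    rw [hcdef]
    exact div_pos (mul_pos (mul_pos hLpos hDpos) hNpos) (by linarith)
  have hc_eq : (ℓ:ℝ)*(d:ℝ)/(8000*((m:ℝ)/(n:ℝ) + (ℓ:ℝ)/(4000*(n:ℝ)))) = c := by
    have hγ : (0:ℝ) < (m:ℝ)/(n:ℝ) + (ℓ:ℝ)/(4000*(n:ℝ)) := by
      have h1 : (0:ℝ) < (m:ℝ)/(n:ℝ) := by positivity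
      have h2 : (0:ℝ) < (ℓ:ℝ) := by nlinarith [hLpos]
      have h3 : (0:ℝ) < (ℓ:ℝ)/(4000*(n:ℝ)) := by positivity
      linarith
    rw [hcdef, hLdef, div_eq_div_iff (by linarith : (0:ℝ) < 8000*((m:ℝ)/(n:ℝ) + (ℓ:ℝ)/(4000*(n:ℝ)))).ne' (by linarith : (0:ℝ) < 2*((m:ℝ)+L)).ne']
    field_simp
    ring
  -- key consequence of the negated goal
  have key : ∀ a ∈ A, ∀ a' ∈ A, a ≤ a' → ((a' - a : ℤ):ℝ) ≤ L →
      d ∣ (a' - a) ∧ ((a' - a : ℤ):ℝ) < c := by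
    intro a ha a' ha' hle hdle
    rcases eq_or_lt_of_le hle with heq | hlt
    · subst heq
      refine ⟨by simp, ?_⟩
      simpa using hcpos
    · obtain ⟨h1, h2⟩ := hcon a ha a' ha' hlt
      have hdvd : d ∣ a' - a := by
        by_contra hnd
        have h3 := h1 hnd (by omega)
        linarith
      refine ⟨hdvd, ?_⟩
      by_contra hge
      push_neg at hge
      have h3 := h2 hdvd (by rw [hc_eq]; exact hge)
      have h4 : ((a'-a:ℤ):ℝ) ≤ (ℓ:ℝ)*(d:ℝ)/4000 := by
        have hL1 : L ≤ L*(d:ℝ) := by nlinarith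
        have h5 : L*(d:ℝ) = (ℓ:ℝ)*(d:ℝ)/4000 := by rw [hLdef]; ring
        linarith
      linarith
  -- window setup
  obtain ⟨K, hKle, hKlt⟩ : ∃ K:ℤ, (K:ℝ) ≤ L ∧ L < (K:ℝ)+1 :=
    ⟨⌊L⌋, Int.floor_le L, Int.lt_floor_add_one L⟩
  have hK0 : (0:ℤ) < K := by
    have h1 : (0:ℝ) < (K:ℝ) := by linarith
    exact_mod_cast h1
  set T : ℤ := K + 1 with hTdef
  have hTpos : (0:ℤ) < T := by omega
  have hTL : L < (T:ℝ) := by rw [hTdef]; push_cast; linarith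
  set Jmax : ℤ := ((m:ℤ) - 1) / T with hJdef
  have hm1 : (1:ℤ) ≤ (m:ℤ) := by exact_mod_cast (by omega : 1 ≤ m)
  have hJmax0 : (0:ℤ) ≤ Jmax := Int.ediv_nonneg (by omega) (by omega)
  -- fiberwise decomposition
  have hmaps : ∀ a ∈ A, (a - 1)/T ∈ Finset.Icc (0:ℤ) Jmax := by
    intro a ha
    have hmem := Finset.mem_Icc.mp (hA ha)
    exact Finset.mem_Icc.mpr ⟨Int.ediv_nonneg (by omega) (by omega),
      Int.ediv_le_ediv hTpos (by omega)⟩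
  have hsum := Finset.card_eq_sum_card_fiberwise hmaps
  -- per-fiber bound
  have hfiber : ∀ j ∈ Finset.Icc (0:ℤ) Jmax,
      ((A.filter (fun a => (a-1)/T = j)).card : ℝ) < c/(d:ℝ) + 1 := by
    intro j _
    set S := A.filter (fun a => (a-1)/T = j) with hSdef
    rcases S.eq_empty_or_nonempty with he | hne
    · rw [he]
      simp only [Finset.card_empty, Nat.cast_zero]
      have := div_pos hcpos hDpos
      linarith
    · have ha0 := S.min'_mem hne
      have ha1 := S.max'_mem hne
      set a0 := S.min' hne with ha0def
      set a1 := S.max' hne with ha1def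
      have hwin : ∀ x ∈ S, x ∈ A ∧ (x-1)/T = j := by
        intro x hx
        exact Finset.mem_filter.mp hx
      have hspan : ∀ x ∈ S, ∀ y ∈ S, y - x ≤ K := by
        intro x hx y hy
        obtain ⟨hxA, hxj⟩ := hwin x hx
        obtain ⟨hyA, hyj⟩ := hwin y hy
        have e1 := Int.mul_ediv_add_emod (x-1) T
        have e2 := Int.mul_ediv_add_emod (y-1) T
        rw [hxj] at e1
        rw [hyj] at e2
        have r1 : 0 ≤ (x-1) % T := Int.emod_nonneg _ (by omega)
        have r2 : (x-1) % T < T := Int.emod_lt_of_pos _ hTpos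
        have r3 : 0 ≤ (y-1) % T := Int.emod_nonneg _ (by omega)
        have r4 : (y-1) % T < T := Int.emod_lt_of_pos _ hTpos
        have hT1 : T = K + 1 := hTdef
        linarith
      have hdvd : ∀ x ∈ S, d ∣ (x - a0) ∧ ((x - a0:ℤ):ℝ) < c := by
        intro x hx
        have hle := S.min'_le x hx
        have hKx : x - a0 ≤ K := hspan a0 ha0 x hx
        have hKx' : ((x - a0:ℤ):ℝ) ≤ (K:ℝ) := by exact_mod_cast hKx
        exact key a0 (hwin a0 ha0).1 x (hwin x hx).1 hle (le_trans hKx' hKle)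
      set q : ℤ := (a1 - a0)/d with hqdef
      have ha01 : a0 ≤ a1 := S.min'_le a1 ha1
      have hq0 : 0 ≤ q := Int.ediv_nonneg (by omega) (by omega)
      have hdq : d * q = a1 - a0 := Int.mul_ediv_cancel' (hdvd a1 ha1).1
      have hinj : S.card ≤ (Finset.Icc (0:ℤ) q).card := by
        apply Finset.card_le_card_of_injOn (fun x => (x - a0)/d)
        · intro x hx
          refine Finset.mem_Icc.mpr ⟨Int.ediv_nonneg (by
              have := S.min'_le x hx; omega) (by omega), ?_⟩
          have h1 : (x - a0)/d ≤ (a1 - a0)/d :=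
            Int.ediv_le_ediv (by omega) (by have := S.le_max' x hx; omega)
          rw [← hqdef] at h1
          exact h1
        · intro x hx y hy hxy
          simp only at hxy
          have hx' := Int.mul_ediv_cancel' (hdvd x hx).1
          have hy' := Int.mul_ediv_cancel' (hdvd y hy).1
          have : x - a0 = y - a0 := by rw [← hx', ← hy', hxy]
          omega
      have hcardq : (S.card:ℤ) ≤ q + 1 := by
        rw [Int.card_Icc] at hinj
        omega
      have hcardq' : (S.card:ℝ) ≤ (q:ℝ) + 1 := by exact_mod_cast hcardq
      have hqc : (d:ℝ)*(q:ℝ) < c := by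
        have h1 : ((a1 - a0:ℤ):ℝ) < c := (hdvd a1 ha1).2
        have h2 : (d:ℝ)*(q:ℝ) = ((a1 - a0:ℤ):ℝ) := by exact_mod_cast hdq
        linarith
      have hqcd : (q:ℝ) < c/(d:ℝ) := by
        rw [lt_div_iff₀ hDpos]
        linarith [hqc]
      linarith
  -- sum up
  have hne0 : (Finset.Icc (0:ℤ) Jmax).Nonempty := ⟨0, Finset.mem_Icc.mpr ⟨le_refl 0, hJmax0⟩⟩
  have hlt : ((n : ℝ)) < ((Finset.Icc (0:ℤ) Jmax).card : ℝ) * (c/(d:ℝ) + 1) := by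
    have h1 : ((A.card : ℝ)) = ∑ j ∈ Finset.Icc (0:ℤ) Jmax,
        ((A.filter (fun a => (a-1)/T = j)).card : ℝ) := by
      rw [hsum]; push_cast; ring
    rw [← hcard, h1]
    calc ∑ j ∈ Finset.Icc (0:ℤ) Jmax, ((A.filter (fun a => (a-1)/T = j)).card : ℝ)
        < ∑ _j ∈ Finset.Icc (0:ℤ) Jmax, (c/(d:ℝ) + 1) :=
          Finset.sum_lt_sum_of_nonempty hne0 hfiber
      _ = ((Finset.Icc (0:ℤ) Jmax).card : ℝ) * (c/(d:ℝ) + 1) := by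
          rw [Finset.sum_const, nsmul_eq_mul]
  have hJcard : ((Finset.Icc (0:ℤ) Jmax).card : ℝ) = (Jmax:ℝ) + 1 := by
    rw [Int.card_Icc]
    have h2 : ((Jmax + 1 - 0).toNat : ℤ) = Jmax + 1 := by omega
    exact_mod_cast h2
  have hJT : Jmax * T ≤ (m:ℤ) - 1 := Int.ediv_mul_le ((m:ℤ)-1) (by omega)
  have hJTr : (Jmax:ℝ) * (T:ℝ) ≤ (m:ℝ) - 1 := by exact_mod_cast hJT
  have hJ0r : (0:ℝ) ≤ (Jmax:ℝ) := by exact_mod_cast hJmax0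
  -- final contradiction
  have h1 : (Jmax:ℝ) + 1 < ((m:ℝ)+L)/L := by
    rw [lt_div_iff₀ hLpos]
    nlinarith [mul_le_mul_of_nonneg_left hTL.le hJ0r]
  have hcdpos : (0:ℝ) < c/(d:ℝ) + 1 := by
    have := div_pos hcpos hDpos; linarith
  have h2 : (n:ℝ) < ((m:ℝ)+L)/L * (c/(d:ℝ) + 1) := by
    calc (n:ℝ) < ((Finset.Icc (0:ℤ) Jmax).card : ℝ) * (c/(d:ℝ) + 1) := hlt
      _ = ((Jmax:ℝ) + 1) * (c/(d:ℝ) + 1) := by rw [hJcard]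
      _ < ((m:ℝ)+L)/L * (c/(d:ℝ) + 1) := mul_lt_mul_of_pos_right h1 hcdpos
  have h3 : ((m:ℝ)+L)/L * (c/(d:ℝ) + 1) = (n:ℝ)/2 + ((m:ℝ)+L)/L := by
    rw [hcdef]
    field_simp
  have h4 : (n:ℝ)/2 < ((m:ℝ)+L)/L := by linarith
  have h5 : (n:ℝ)*L < 2*((m:ℝ)+L) := by
    have := (lt_div_iff₀ hLpos).mp h4
    linarith
  have hLN : 4*(m:ℝ) ≤ L*(n:ℝ) := by
    rw [div_le_iff₀ hNpos] at hL4
    linarith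
  nlinarith [mul_nonneg (show (0:ℝ) ≤ (n:ℝ) - 4 by linarith) hLpos.le]
end

section
/- Let a_1 < a_2 < ... < a_n be positive integers with gcd(a_1, ..., a_n) = 1, and suppose (as guaranteed by the finite addition theorem) there is an integer s ≥ 0 such that {s, s+1, ..., s + a_n − 1} ⊆ k·(A'/d) where A' = {0, a_1, ..., a_{n−1}}, d = gcd(a_1,...,a_{n−1}), and k ≥ 1. Then every integer t ≥ (d−1)·a_n + s·d can be written as t = a_1 x_1 + ... + a_n x_n with non-negative integers x_1, ..., x_n. -/
open Pointwise

lemma int_finset_gcd_nonneg (s : Finset ℕ) (f : ℕ → ℤ) : 0 ≤ s.gcd f := by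
  induction s using Finset.induction with
  | empty => simp
  | insert h ih =>
    rw [Finset.gcd_insert, ← Int.coe_gcd]
    exact Int.natCast_nonneg _

theorem stmt15 (n : ℕ) (hn : 2 ≤ n) (a : ℕ → ℤ)
    (hpos : ∀ i, 1 ≤ i → i ≤ n → 0 < a i)
    (hmono : ∀ i, 1 ≤ i → i < n → a i < a (i + 1))
    (hgcd : Finset.gcd (Finset.Icc 1 n) a = 1)
    (d : ℤ) (hd : d = Finset.gcd (Finset.Icc 1 (n - 1)) a)
    (k : ℕ) (hk : 1 ≤ k) (s : ℤ) (hs : 0 ≤ s)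
    (hAP : ∀ j : ℤ, 0 ≤ j → j < a n →
      s + j ∈ kFold k ({0} ∪ {x : ℤ | ∃ i, 1 ≤ i ∧ i ≤ n - 1 ∧ x = a i / d})) :
    ∀ t : ℤ, (d - 1) * a n + s * d ≤ t →
      ∃ x : ℕ → ℕ, t = ∑ i ∈ Finset.Icc 1 n, a i * (x i : ℤ) := by
  intro t ht
  have han : 0 < a n := hpos n (by omega) le_rfl
  have h1mem : (1 : ℕ) ∈ Finset.Icc 1 (n - 1) := Finset.mem_Icc.mpr ⟨le_refl 1, by omega⟩
  have hdvd_ai : ∀ i ∈ Finset.Icc 1 (n - 1), d ∣ a i := fun i hi => hd ▸ Finset.gcd_dvd hi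
  have hd0 : 0 < d := by
    rcases lt_or_eq_of_le (hd ▸ int_finset_gcd_nonneg (Finset.Icc 1 (n-1)) a) with h | h
    · exact h
    · exfalso
      have h1 : d ∣ a 1 := hdvd_ai 1 h1mem
      rw [← h] at h1
      have h2 : a 1 = 0 := zero_dvd_iff.mp h1
      have := hpos 1 le_rfl (by omega)
      omega
  -- split Icc 1 n
  have hsplit : Finset.Icc 1 n = insert n (Finset.Icc 1 (n - 1)) := by
    ext i; simp [Finset.mem_Icc]; omega
  have hnmem : n ∉ Finset.Icc 1 (n - 1) := by simp [Finset.mem_Icc]; omega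
  -- coprimality of a n and d
  have hcop : IsCoprime (a n) d := by
    rw [Int.isCoprime_iff_gcd_eq_one]
    have : Finset.gcd (Finset.Icc 1 n) a = GCDMonoid.gcd (a n) d := by
      rw [hsplit, Finset.gcd_insert, hd]
    rw [this] at hgcd
    rw [← Int.coe_gcd] at hgcd
    exact_mod_cast hgcd
  obtain ⟨v, u, huv⟩ := hcop  -- v * a n + u * d = 1
  set m : ℤ := (t * v) % d with hm
  have hm0 : 0 ≤ m := Int.emod_nonneg _ (ne_of_gt hd0)
  have hmlt : m < d := Int.emod_lt_of_pos _ hd0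
  have hdsub : d ∣ t * v - m := Int.dvd_self_sub_of_emod_eq rfl
  obtain ⟨c, hc⟩ := hdsub
  have hdvdt' : d ∣ t - m * a n := ⟨c * a n + t * u, by linear_combination a n * hc - t * huv⟩
  obtain ⟨u', hu'⟩ := hdvdt'
  have hu's : s ≤ u' := by nlinarith
  set w : ℤ := u' - s with hw
  have hw0 : 0 ≤ w := by omega
  set j : ℤ := w % a n with hj
  set q : ℤ := w / a n with hq
  have hj0 : 0 ≤ j := Int.emod_nonneg _ (ne_of_gt han)
  have hjlt : j < a n := Int.emod_lt_of_pos _ han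
  have hq0 : 0 ≤ q := Int.ediv_nonneg hw0 han.le
  have hwqj : w = a n * q + j := (Int.mul_ediv_add_emod w (a n)).symm
  -- representation of s + j
  have key : ∀ K : ℕ, ∀ x : ℤ,
      x ∈ kFold K ({0} ∪ {x : ℤ | ∃ i, 1 ≤ i ∧ i ≤ n - 1 ∧ x = a i / d}) →
      ∃ y : ℕ → ℕ, x = ∑ i ∈ Finset.Icc 1 (n - 1), (a i / d) * (y i : ℤ) := by
    intro K
    induction K with
    | zero =>
      intro x hx
      simp only [kFold, Set.mem_singleton_iff] at hx
      exact ⟨fun _ => 0, by simp [hx]⟩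
    | succ K ih =>
      intro x hx
      rw [kFold] at hx
      obtain ⟨b, hb, c, hc, rfl⟩ := hx
      obtain ⟨y, hy⟩ := ih c hc
      rcases hb with hb0 | ⟨i, hi1, hi2, rfl⟩
      · simp only [Set.mem_singleton_iff] at hb0
        exact ⟨y, by simp [hb0, hy]⟩
      · refine ⟨fun j => y j + if j = i then 1 else 0, ?_⟩
        have hiI : i ∈ Finset.Icc 1 (n - 1) := Finset.mem_Icc.mpr ⟨hi1, hi2⟩
        push_cast
        simp only [mul_add, Finset.sum_add_distrib, mul_ite, mul_one, mul_zero,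
          Finset.sum_ite_eq', hiI, if_true]
        rw [← hy]; ring
  obtain ⟨y, hy⟩ := key k (s + j) (hAP j hj0 hjlt)
  have hsum : d * (s + j) = ∑ i ∈ Finset.Icc 1 (n - 1), a i * (y i : ℤ) := by
    rw [hy, Finset.mul_sum]
    refine Finset.sum_congr rfl fun i hi => ?_
    rw [← mul_assoc, Int.mul_ediv_cancel' (hdvd_ai i hi)]
  refine ⟨fun i => if i = n then (d * q + m).toNat else y i, ?_⟩
  rw [hsplit, Finset.sum_insert hnmem]
  simp only [eq_self_iff_true, if_true]
  have htn : ((d * q + m).toNat : ℤ) = d * q + m :=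
    Int.toNat_of_nonneg (by positivity)
  rw [htn]
  have hrest : ∑ i ∈ Finset.Icc 1 (n - 1), a i * ((if i = n then (d * q + m).toNat else y i : ℕ) : ℤ)
      = ∑ i ∈ Finset.Icc 1 (n - 1), a i * (y i : ℤ) := by
    refine Finset.sum_congr rfl fun i hi => ?_
    have : i ≠ n := by simp [Finset.mem_Icc] at hi; omega
    simp [this]
  rw [hrest, ← hsum]
  linear_combination hu' + d * hwqj
end
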